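/- arXiv:1908.07909 — 9 statements merged into one kernel-verified Lean document; each statement's English description precedes it below -/
import Mathlib

section
/- Let p ≥ 1 and q ≥ 3 be integers and let G = JFG(p,q) be the jellyfish graph. Then the determinant of the signless Laplacian matrix Q(G) equals 0 if q is even, and equals 4 if q is odd. -/
open SimpleGraph Matrix Polynomial
open scoped Classical

/-- The jellyfish graph `JFG(p,q)`: a cycle `C_q` together with `q` copies of the
star `K_{1,p}`, the center of each star merged with one cycle vertex.  Cycle
vertices are `Sum.inl i : Fin q`, pendant vertices are `Sum.inr (j, k)`. -/
def jellyfish (p q : ℕ) : SimpleGraph (Fin q ⊕ Fin q × Fin p) :=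
  SimpleGraph.fromRel (fun a b =>
    match a, b with
    | Sum.inl i, Sum.inl j => (j : ℕ) = ((i : ℕ) + 1) % q ∨ (i : ℕ) = ((j : ℕ) + 1) % q
    | Sum.inl i, Sum.inr jk => i = jk.1
    | _, _ => False)

/-- The signless Laplacian matrix `Q(G) = D(G) + A(G)` of a graph. -/
noncomputable def signlessLap {V : Type*} [Fintype V] [DecidableEq V]
    (G : SimpleGraph V) : Matrix V V ℝ :=
  G.degMatrix ℝ + G.adjMatrix ℝ

noncomputable def Pm (m : ℕ) : Matrix (Fin (m+3)) (Fin (m+3)) ℝ :=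
  Matrix.of fun i j => if j = i + 1 then 1 else 0

lemma twoNeZeroFin (m : ℕ) : (1 + 1 : Fin (m+3)) ≠ 0 := by
  intro h
  have h2 := congrArg Fin.val h
  rw [Fin.val_add, Fin.val_one, Fin.val_zero, Nat.mod_eq_of_lt (by omega)] at h2
  omega

open Fin.NatCast Fin.CommRing in
lemma perm_shift (m : ℕ) (σ : Equiv.Perm (Fin (m+3)))
    (h : ∀ i, σ i = i ∨ σ i = i - 1) (h1 : σ ≠ 1) : ∀ i, σ i = i - 1 := by
  obtain ⟨j, hj⟩ : ∃ j, σ j ≠ j := by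
    by_contra hc
    push_neg at hc
    exact h1 (Equiv.ext hc)
  have hj' : σ j = j - 1 := (h j).resolve_left hj
  have step : ∀ x : Fin (m+3), σ x = x - 1 → σ (x - 1) = x - 1 - 1 := by
    intro x hx
    rcases h (x - 1) with h' | h'
    · exfalso
      have := σ.injective (hx.trans h'.symm)
      have : (1 : Fin (m+3)) = 0 := by
        have := sub_eq_self.mp this.symm
        exact this
      exact one_ne_zero this
    · exact h'
  have all : ∀ n : ℕ, σ (j - (n : Fin (m+3))) = j - (n : Fin (m+3)) - 1 := by
    intro n
    induction n with
    | zero => simpa using hj'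
    | succ k ih =>
      have := step _ ih
      have hcast : ((k+1 : ℕ) : Fin (m+3)) = (k : Fin (m+3)) + 1 := by push_cast; ring
      rw [hcast, sub_add_eq_sub_sub]
      exact this
  intro i
  have hi : j - (((j - i).val : ℕ) : Fin (m+3)) = i := by
    rw [Fin.cast_val_eq_self]
    exact sub_sub_cancel j i
  calc σ i = σ (j - (((j - i).val : ℕ) : Fin (m+3))) := by rw [hi]
    _ = j - (((j - i).val : ℕ) : Fin (m+3)) - 1 := all _
    _ = i - 1 := by rw [hi]

lemma det_one_add_Pm (m : ℕ) : (1 + Pm m).det = 1 + (-1 : ℝ)^(m+2) := by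
  classical
  set τ : Equiv.Perm (Fin (m+3)) := Equiv.subRight 1 with hτ
  have hτapp : ∀ i, τ i = i - 1 := fun i => rfl
  have hentry : ∀ i j, (1 + Pm m) i j = (if i = j then (1:ℝ) else 0) + (if j = i + 1 then 1 else 0) := by
    intro i j
    simp [Pm, Matrix.one_apply, Matrix.add_apply]
  rw [Matrix.det_apply]
  have hvanish : ∀ σ ∈ Finset.univ, σ ∉ ({1, τ} : Finset (Equiv.Perm (Fin (m+3)))) →
      (Equiv.Perm.sign σ • ∏ i, (1 + Pm m) (σ i) i : ℝ) = 0 := by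
    intro σ _ hσ
    simp only [Finset.mem_insert, Finset.mem_singleton] at hσ
    push_neg at hσ
    obtain ⟨hσ1, hστ⟩ := hσ
    by_cases hall : ∀ i, σ i = i ∨ σ i = i - 1
    · exact absurd (Equiv.ext (perm_shift m σ hall hσ1)) hστ
    · push_neg at hall
      obtain ⟨i, hi1, hi2⟩ := hall
      have : (1 + Pm m) (σ i) i = 0 := by
        rw [hentry]
        rw [if_neg hi1, if_neg]
        · ring
        · intro hc
          exact hi2 (eq_sub_of_add_eq hc.symm)
      have hz := Finset.prod_eq_zero (f := fun j => (1 + Pm m) (σ j) j) (Finset.mem_univ i) this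
      rw [hz, smul_zero]
  rw [← Finset.sum_subset (Finset.subset_univ ({1, τ} : Finset _)) hvanish]
  have h1τ : (1 : Equiv.Perm (Fin (m+3))) ≠ τ := by
    intro hc
    have h0 := Equiv.ext_iff.mp hc 0
    simp only [Equiv.Perm.coe_one, id_eq] at h0
    rw [hτapp] at h0
    exact one_ne_zero (sub_eq_self.mp h0.symm)
  rw [Finset.sum_insert (by simpa using h1τ), Finset.sum_singleton]
  have hprod1 : (∏ i, (1 + Pm m) ((1 : Equiv.Perm (Fin (m+3))) i) i) = (1:ℝ) := by
    apply Finset.prod_eq_one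
    intro i _
    rw [Equiv.Perm.coe_one, id_eq, hentry, if_pos rfl, if_neg, add_zero]
    exact fun hc => one_ne_zero (left_eq_add.mp hc)
  have hprodτ : (∏ i, (1 + Pm m) (τ i) i) = (1:ℝ) := by
    apply Finset.prod_eq_one
    intro i _
    rw [hτapp, hentry, if_neg, if_pos (sub_add_cancel i 1).symm, zero_add]
    intro hc
    exact one_ne_zero (sub_eq_self.mp hc)
  have hsignτ : Equiv.Perm.sign τ = (-1)^(m+2) := by
    have hτinv : τ⁻¹ = finRotate (m+3) := by
      apply Equiv.ext
      intro i
      have h2 : τ (i + 1) = i := by rw [hτapp]; exact add_sub_cancel_right i 1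
      conv_lhs => rw [← h2]
      rw [Equiv.Perm.inv_def, Equiv.symm_apply_apply, finRotate_succ_apply]
    calc Equiv.Perm.sign τ = Equiv.Perm.sign τ⁻¹ := (Equiv.Perm.sign_inv τ).symm
      _ = (-1)^(m+2) := by rw [hτinv, sign_finRotate]; rfl
  rw [hprod1, hprodτ, hsignτ, Equiv.Perm.sign_one]
  rw [one_smul, Units.smul_def]
  simp [Units.val_pow_eq_pow_val]

section Graph
variable (p m : ℕ)

lemma val_succ_mod (i : Fin (m+3)) : ((i : ℕ) + 1) % (m+3) = ((i + 1 : Fin (m+3)) : ℕ) := by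
  rw [Fin.val_add, Fin.val_one]

lemma adj_inl_inl (i j : Fin (m+3)) :
    (jellyfish p (m+3)).Adj (Sum.inl i) (Sum.inl j) ↔ (j = i + 1 ∨ i = j + 1) := by
  rw [jellyfish, SimpleGraph.fromRel_adj]
  simp only [val_succ_mod]
  constructor
  · rintro ⟨-, h⟩
    rcases h with (h | h) | (h | h) <;>
      [exact Or.inl (Fin.val_injective h); exact Or.inr (Fin.val_injective h);
       exact Or.inr (Fin.val_injective h); exact Or.inl (Fin.val_injective h)]
  · intro h
    refine ⟨?_, ?_⟩
    · rintro hc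
      injection hc with hc
      rcases h with h | h <;>
        exact one_ne_zero (left_eq_add.mp (by rw [← hc] at h; exact h))
    · rcases h with h | h
      · exact Or.inl (Or.inl (by rw [h]))
      · exact Or.inl (Or.inr (by rw [h]))

lemma adj_inl_inr (i : Fin (m+3)) (jk : Fin (m+3) × Fin p) :
    (jellyfish p (m+3)).Adj (Sum.inl i) (Sum.inr jk) ↔ i = jk.1 := by
  rw [jellyfish, SimpleGraph.fromRel_adj]
  simp

lemma adj_inr_inr (a b : Fin (m+3) × Fin p) :
    ¬ (jellyfish p (m+3)).Adj (Sum.inr a) (Sum.inr b) := by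
  rw [jellyfish, SimpleGraph.fromRel_adj]
  simp

lemma add_one_ne_sub_one (i : Fin (m+3)) : i + 1 ≠ i - 1 := by
  intro h
  have h2 : i + (1 + 1) = i := by
    rw [← add_assoc, h]
    exact sub_add_cancel i 1
  exact twoNeZeroFin m (left_eq_add.mp h2.symm)

lemma degree_inl (i : Fin (m+3)) :
    (jellyfish p (m+3)).degree (Sum.inl i) = 2 + p := by
  classical
  rw [SimpleGraph.degree, SimpleGraph.neighborFinset_eq_filter, Finset.card_filter]
  rw [Fintype.sum_sum_type]
  have h1 : (∑ j : Fin (m+3), if (jellyfish p (m+3)).Adj (Sum.inl i) (Sum.inl j) then 1 else 0) = 2 := by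
    have hmem : ∀ j : Fin (m+3),
        (jellyfish p (m+3)).Adj (Sum.inl i) (Sum.inl j) ↔ j ∈ ({i + 1, i - 1} : Finset (Fin (m+3))) := by
      intro j
      rw [adj_inl_inl]
      simp only [Finset.mem_insert, Finset.mem_singleton]
      constructor
      · rintro (h | h)
        · exact Or.inl h
        · exact Or.inr (eq_sub_of_add_eq h.symm)
      · rintro (h | h)
        · exact Or.inl h
        · exact Or.inr (sub_eq_iff_eq_add.mp h.symm)
    calc (∑ j : Fin (m+3), if (jellyfish p (m+3)).Adj (Sum.inl i) (Sum.inl j) then 1 else 0)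
        = ∑ j : Fin (m+3), if j ∈ ({i + 1, i - 1} : Finset (Fin (m+3))) then 1 else 0 :=
          Finset.sum_congr rfl (fun j _ => if_congr (hmem j) rfl rfl)
      _ = 2 := by
          rw [Finset.sum_ite_mem, Finset.univ_inter, Finset.sum_const, smul_eq_mul, mul_one]
          rw [Finset.card_insert_of_notMem (by simp [add_one_ne_sub_one]), Finset.card_singleton]
  have h2 : (∑ jk : Fin (m+3) × Fin p, if (jellyfish p (m+3)).Adj (Sum.inl i) (Sum.inr jk) then 1 else 0) = p := by
    calc (∑ jk : Fin (m+3) × Fin p, if (jellyfish p (m+3)).Adj (Sum.inl i) (Sum.inr jk) then 1 else 0)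
        = ∑ jk : Fin (m+3) × Fin p, if i = jk.1 then 1 else 0 :=
          Finset.sum_congr rfl (fun jk _ => if_congr (adj_inl_inr p m i jk) rfl rfl)
      _ = p := by
          rw [Fintype.sum_prod_type]
          simp [apply_ite Finset.card, Finset.sum_ite_eq]
  rw [h1, h2]

lemma degree_inr (jk : Fin (m+3) × Fin p) :
    (jellyfish p (m+3)).degree (Sum.inr jk) = 1 := by
  classical
  rw [SimpleGraph.degree, SimpleGraph.neighborFinset_eq_filter, Finset.card_filter]
  rw [Fintype.sum_sum_type]
  have h1 : (∑ j : Fin (m+3), if (jellyfish p (m+3)).Adj (Sum.inr jk) (Sum.inl j) then 1 else 0) = 1 := by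
    have : ∀ j : Fin (m+3), (jellyfish p (m+3)).Adj (Sum.inr jk) (Sum.inl j) ↔ j = jk.1 := by
      intro j
      rw [SimpleGraph.adj_comm, adj_inl_inr]
    calc (∑ j : Fin (m+3), if (jellyfish p (m+3)).Adj (Sum.inr jk) (Sum.inl j) then 1 else 0)
        = ∑ j : Fin (m+3), if j = jk.1 then 1 else 0 :=
          Finset.sum_congr rfl (fun j _ => if_congr (this j) rfl rfl)
      _ = 1 := by simp
  have h2 : (∑ ab : Fin (m+3) × Fin p, if (jellyfish p (m+3)).Adj (Sum.inr jk) (Sum.inr ab) then 1 else 0) = 0 := by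
    simp [adj_inr_inr]
  rw [h1, h2]

end Graph

noncomputable def Bm (p m : ℕ) : Matrix (Fin (m+3)) (Fin (m+3) × Fin p) ℝ :=
  Matrix.of fun i jk => if i = jk.1 then 1 else 0

noncomputable def Am (p m : ℕ) : Matrix (Fin (m+3)) (Fin (m+3)) ℝ :=
  Matrix.of fun i j => if i = j then (2 + p : ℝ) else if j = i + 1 ∨ i = j + 1 then 1 else 0

lemma block_eq (p m : ℕ) :
    signlessLap (jellyfish p (m+3)) =
      Matrix.fromBlocks (Am p m) (Bm p m) (Bm p m)ᵀ 1 := by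
  ext a b
  cases a with
  | inl i =>
    cases b with
    | inl j =>
      rw [Matrix.fromBlocks_apply₁₁]
      simp only [signlessLap, Matrix.add_apply, SimpleGraph.degMatrix, Matrix.diagonal_apply,
        SimpleGraph.adjMatrix_apply, Am, Matrix.of_apply]
      by_cases h : i = j
      · subst h
        rw [if_pos rfl, if_pos rfl, degree_inl, if_neg (SimpleGraph.irrefl _)]
        push_cast
        ring
      · rw [if_neg (by simpa using h), if_neg h, zero_add]
        by_cases h2 : (jellyfish p (m+3)).Adj (Sum.inl i) (Sum.inl j)
        · rw [if_pos h2, if_pos ((adj_inl_inl p m i j).mp h2)]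
        · rw [if_neg h2, if_neg (fun hc => h2 ((adj_inl_inl p m i j).mpr hc))]
    | inr cd =>
      rw [Matrix.fromBlocks_apply₁₂]
      simp only [signlessLap, Matrix.add_apply, SimpleGraph.degMatrix, Matrix.diagonal_apply,
        SimpleGraph.adjMatrix_apply, Bm, Matrix.of_apply]
      rw [if_neg (by simp), zero_add]
      by_cases h2 : (jellyfish p (m+3)).Adj (Sum.inl i) (Sum.inr cd)
      · rw [if_pos h2, if_pos ((adj_inl_inr p m i cd).mp h2)]
      · rw [if_neg h2, if_neg (fun hc => h2 ((adj_inl_inr p m i cd).mpr hc))]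
  | inr ab =>
    cases b with
    | inl j =>
      rw [Matrix.fromBlocks_apply₂₁]
      simp only [signlessLap, Matrix.add_apply, SimpleGraph.degMatrix, Matrix.diagonal_apply,
        SimpleGraph.adjMatrix_apply, Bm, Matrix.transpose_apply, Matrix.of_apply]
      rw [if_neg (by simp), zero_add]
      have hadj : (jellyfish p (m+3)).Adj (Sum.inr ab) (Sum.inl j) ↔ j = ab.1 := by
        rw [SimpleGraph.adj_comm, adj_inl_inr]
      by_cases h2 : (jellyfish p (m+3)).Adj (Sum.inr ab) (Sum.inl j)
      · rw [if_pos h2, if_pos (hadj.mp h2)]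
      · rw [if_neg h2, if_neg (fun hc => h2 (hadj.mpr hc))]
    | inr cd =>
      rw [Matrix.fromBlocks_apply₂₂]
      simp only [signlessLap, Matrix.add_apply, SimpleGraph.degMatrix, Matrix.diagonal_apply,
        SimpleGraph.adjMatrix_apply, Matrix.one_apply]
      rw [if_neg (adj_inr_inr p m ab cd), add_zero]
      by_cases h : ab = cd
      · subst h
        rw [if_pos rfl, if_pos rfl, degree_inr]
        norm_num
      · rw [if_neg (by simpa using h), if_neg h]

lemma BBt (p m : ℕ) : Bm p m * (Bm p m)ᵀ = (p : ℝ) • 1 := by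
  ext i j
  rw [Matrix.mul_apply, Fintype.sum_prod_type]
  simp only [Bm, Matrix.of_apply, Matrix.transpose_apply, Matrix.smul_apply, Matrix.one_apply,
    smul_eq_mul]
  by_cases h : i = j
  · subst h
    simp [Finset.sum_ite_eq, mul_ite, ite_mul]
  · rw [if_neg h, mul_zero]
    apply Finset.sum_eq_zero
    intro a _
    apply Finset.sum_eq_zero
    intro b _
    by_cases h1 : i = a
    · rw [if_pos h1, if_neg (fun h2 => h (h1.trans h2.symm)), mul_zero]
    · rw [if_neg h1, zero_mul]

lemma PPt (m : ℕ) : Pm m * (Pm m)ᵀ = 1 := by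
  ext i j
  rw [Matrix.mul_apply]
  simp only [Pm, Matrix.of_apply, Matrix.transpose_apply, Matrix.one_apply]
  rw [Finset.sum_eq_single (i + 1)]
  · rw [if_pos rfl]
    by_cases h : i = j
    · subst h
      rw [if_pos rfl, if_pos rfl, mul_one]
    · rw [if_neg h, if_neg (fun hc => h (add_right_cancel hc)), mul_zero]
  · intro k _ hk
    rw [if_neg hk, zero_mul]
  · intro hk
    exact absurd (Finset.mem_univ _) hk

lemma Am_sub (p m : ℕ) :
    Am p m - Bm p m * (Bm p m)ᵀ = (1 + Pm m) * (1 + (Pm m)ᵀ) := by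
  rw [BBt]
  have expand : (1 + Pm m) * (1 + (Pm m)ᵀ) = 1 + (Pm m)ᵀ + Pm m + Pm m * (Pm m)ᵀ := by
    rw [add_mul, one_mul, mul_add, mul_one]
    abel
  rw [expand, PPt]
  ext i j
  simp only [Matrix.sub_apply, Matrix.add_apply, Matrix.smul_apply, Matrix.one_apply,
    Matrix.transpose_apply, Am, Pm, Matrix.of_apply, smul_eq_mul]
  by_cases h : i = j
  · subst h
    rw [if_pos rfl, if_neg (show ¬i = i + 1 from fun hc => one_ne_zero (left_eq_add.mp hc))]
    simp
    ring
  · rw [if_neg h]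
    by_cases h1 : j = i + 1
    · have h2 : ¬ i = j + 1 := by
        intro h2
        rw [h1] at h2
        exact twoNeZeroFin m (left_eq_add.mp (by rw [add_assoc] at h2; exact h2))
      rw [if_pos (Or.inl h1), if_pos h1, if_neg h2]
      simp [h]
    · by_cases h2 : i = j + 1
      · rw [if_pos (Or.inr h2), if_pos h2, if_neg h1]
        simp [h]
      · rw [if_neg (by tauto), if_neg h1, if_neg h2]
        simp [h]

/-- The determinant of the signless Laplacian of the jellyfish graph `JFG(p,q)`
(with `p ≥ 1`, `q ≥ 3`) is `0` when `q` is even and `4` when `q` is odd. -/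
theorem det_signlessLap_jellyfish
    (p q : ℕ) (hp : 1 ≤ p) (hq : 3 ≤ q) :
    (Even q → (signlessLap (jellyfish p q)).det = 0) ∧
      (Odd q → (signlessLap (jellyfish p q)).det = 4) := by
  obtain ⟨m, rfl⟩ : ∃ m, q = m + 3 := ⟨q - 3, by omega⟩
  have hdet : (signlessLap (jellyfish p (m+3))).det = (1 + (-1:ℝ)^(m+2))^2 := by
    rw [block_eq, Matrix.det_fromBlocks_one₂₂, Am_sub, Matrix.det_mul]
    have ht : (1 + (Pm m)ᵀ) = (1 + Pm m)ᵀ := by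
      rw [Matrix.transpose_add, Matrix.transpose_one]
    rw [ht, Matrix.det_transpose, det_one_add_Pm]
    ring
  constructor
  · intro he
    have hodd : Odd (m + 2) := by
      rcases he with ⟨k, hk⟩
      exact ⟨k - 1, by omega⟩
    rw [hdet, hodd.neg_one_pow]
    ring
  · intro ho
    have heven : Even (m + 2) := by
      rcases ho with ⟨k, hk⟩
      exact ⟨k, by omega⟩
    rw [hdet, heven.neg_one_pow]
    norm_num
end

section
/- Let G be a simple graph on a finite vertex type with at least one edge. Then the largest eigenvalue μ₁(G) of the Laplacian matrix L(G) satisfies μ₁(G) ≥ Δ(G) + 1, where Δ(G) is the maximum vertex degree of G. Moreover, if G is connected with n vertices, then μ₁(G) = Δ(G) + 1 if and only if Δ(G) = n − 1. -/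
open SimpleGraph Matrix Polynomial
open scoped Classical

lemma lapMatrix_isHermitian {V : Type*} [Fintype V] [DecidableEq V]
    (G : SimpleGraph V) : (G.lapMatrix ℝ).IsHermitian := by
  rw [Matrix.IsHermitian, Matrix.conjTranspose_eq_transpose_of_trivial]
  exact G.isSymm_lapMatrix ℝ

lemma rayleigh_aux {n : Type*} [Fintype n] [DecidableEq n] [Nonempty n]
    {A : Matrix n n ℝ} (hA : A.IsHermitian) (x : n → ℝ) :
    x ⬝ᵥ (A *ᵥ x) ≤ (⨆ i, hA.eigenvalues i) * (x ⬝ᵥ x) := by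
  set U : Matrix n n ℝ := (hA.eigenvectorUnitary : Matrix n n ℝ) with hU
  have hsU : star U = Uᵀ := by
    rw [Matrix.star_eq_conjTranspose, Matrix.conjTranspose_eq_transpose_of_trivial]
  set y : n → ℝ := Uᵀ *ᵥ x with hy
  have hUy : U *ᵥ y = x := by
    rw [hy, Matrix.mulVec_mulVec, ← hsU,
      (Matrix.mem_unitaryGroup_iff).mp hA.eigenvectorUnitary.2, Matrix.one_mulVec]
  have hyy : x ⬝ᵥ x = y ⬝ᵥ y := by
    rw [hy, Matrix.dotProduct_mulVec, Matrix.vecMul_transpose, ← hy, hUy]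
  have hAx : x ⬝ᵥ (A *ᵥ x) = ∑ i, hA.eigenvalues i * (y i)^2 := by
    conv_lhs => rw [hA.spectral_theorem, Unitary.conjStarAlgAut_apply]
    rw [hsU, ← Matrix.mulVec_mulVec, ← Matrix.mulVec_mulVec, Matrix.dotProduct_mulVec x,
      ← Matrix.mulVec_transpose, ← hy]
    simp only [dotProduct, Matrix.mulVec_diagonal, Function.comp_apply,
      RCLike.ofReal_real_eq_id, id_eq]
    exact Finset.sum_congr rfl fun i _ => by ring
  have hbdd : BddAbove (Set.range fun i => hA.eigenvalues i) :=
    (Set.finite_range _).bddAbove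
  have hle : ∀ i, hA.eigenvalues i ≤ ⨆ i, hA.eigenvalues i := fun i => le_ciSup hbdd i
  calc x ⬝ᵥ (A *ᵥ x) = ∑ i, hA.eigenvalues i * (y i)^2 := hAx
    _ ≤ ∑ i, (⨆ i, hA.eigenvalues i) * (y i)^2 :=
        Finset.sum_le_sum fun i _ => mul_le_mul_of_nonneg_right (hle i) (sq_nonneg _)
    _ = (⨆ i, hA.eigenvalues i) * (x ⬝ᵥ x) := by
        rw [← Finset.mul_sum, hyy, dotProduct]
        congr 1; exact Finset.sum_congr rfl fun i _ => by ring

lemma quadForm_eq {V : Type*} [Fintype V] [DecidableEq V] (G : SimpleGraph V) (x : V → ℝ) :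
    x ⬝ᵥ (G.lapMatrix ℝ *ᵥ x) =
      (∑ i : V, ∑ j : V, if G.Adj i j then (x i - x j)^2 else 0) / 2 := by
  rw [← Matrix.toLinearMap₂'_apply', SimpleGraph.lapMatrix_toLinearMap₂']

lemma quad_le_card {V : Type*} [Fintype V] [DecidableEq V] (G : SimpleGraph V) (x : V → ℝ) :
    x ⬝ᵥ (G.lapMatrix ℝ *ᵥ x) ≤ (Fintype.card V : ℝ) * (x ⬝ᵥ x) := by
  rw [quadForm_eq]
  have h1 : ∑ i : V, ∑ j : V, (if G.Adj i j then (x i - x j)^2 else 0)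
      ≤ ∑ i : V, ∑ j : V, (x i - x j)^2 := by
    refine Finset.sum_le_sum fun i _ => Finset.sum_le_sum fun j _ => ?_
    split_ifs with h
    · exact le_rfl
    · positivity
  have h2 : ∑ i : V, ∑ j : V, (x i - x j)^2
      = 2*(Fintype.card V : ℝ)*(∑ i, x i * x i) - 2*(∑ i, x i)^2 := by
    have : ∀ i j : V, (x i - x j)^2 = x i * x i + x j * x j - 2 * (x i * x j) := fun i j => by ring
    simp only [this, Finset.sum_sub_distrib, Finset.sum_add_distrib, Finset.sum_const,
      Finset.card_univ, nsmul_eq_mul, ← Finset.mul_sum, ← Finset.sum_mul, sq]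
    ring
  have h3 : x ⬝ᵥ x = ∑ i, x i * x i := rfl
  rw [h3]
  nlinarith [sq_nonneg (∑ i, x i),
    Finset.sum_nonneg (fun i (_ : i ∈ Finset.univ) => mul_self_nonneg (x i))]

lemma cross_edge {V : Type*} {G : SimpleGraph V} (S : Set V) {v w : V}
    (p : G.Walk v w) : v ∈ S → w ∉ S → ∃ a ∈ S, ∃ b, b ∉ S ∧ G.Adj a b := by
  induction p with
  | nil => exact fun hv hw => absurd hv hw
  | @cons u c _ h p ih =>
    intro hv hw
    by_cases hc : c ∈ S
    · exact ih hc hw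
    · exact ⟨u, hv, c, hc, h⟩

lemma eig_le_card {V : Type*} [Fintype V] [DecidableEq V] (G : SimpleGraph V) (i : V) :
    (lapMatrix_isHermitian G).eigenvalues i ≤ (Fintype.card V : ℝ) := by
  set hA := lapMatrix_isHermitian G
  set b : V → ℝ := ⇑(hA.eigenvectorBasis i) with hb
  have hbb : b ⬝ᵥ b = 1 := by
    have h1 : ‖hA.eigenvectorBasis i‖ = 1 := hA.eigenvectorBasis.orthonormal.1 i
    have h2 : (inner ℝ (hA.eigenvectorBasis i) (hA.eigenvectorBasis i) : ℝ) = 1 := by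
      rw [real_inner_self_eq_norm_sq, h1]; norm_num
    rw [← h2, PiLp.inner_apply]
    simp [dotProduct, RCLike.inner_apply, starRingEnd_apply, hb, sq]
  have hmv : G.lapMatrix ℝ *ᵥ b = hA.eigenvalues i • b := hA.mulVec_eigenvectorBasis i
  have h3 := quad_le_card G b
  rw [hmv, dotProduct_smul, smul_eq_mul, hbb, mul_one, mul_one] at h3
  exact h3

/-- **Lower bound for the Laplacian spectral radius.**  If `G` has at least one
edge, then the largest Laplacian eigenvalue satisfies `μ₁(G) ≥ Δ(G) + 1`, where
`Δ(G)` is the maximum degree.  Moreover, if `G` is connected on `n` vertices,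
then equality holds iff `Δ(G) = n − 1`. -/
theorem lapMatrix_spectral_radius_ge_maxDegree_add_one
    {V : Type*} [Fintype V] [DecidableEq V] (G : SimpleGraph V)
    (he : G.edgeSet.Nonempty) :
    ((Finset.univ.sup fun v => G.degree v : ℕ) : ℝ) + 1 ≤
        (⨆ i, (lapMatrix_isHermitian G).eigenvalues i) ∧
      (G.Connected →
        ((⨆ i, (lapMatrix_isHermitian G).eigenvalues i) =
            ((Finset.univ.sup fun v => G.degree v : ℕ) : ℝ) + 1 ↔
          (Finset.univ.sup fun v => G.degree v) = Fintype.card V - 1)) := by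
  obtain ⟨a0, b0, hab⟩ : ∃ a b, G.Adj a b := by
    obtain ⟨e, he⟩ := he
    induction e using Sym2.ind with
    | _ a b => exact ⟨a, b, he⟩
  haveI : Nonempty V := ⟨a0⟩
  set hA := lapMatrix_isHermitian G with hAdef
  set μ : ℝ := ⨆ i, hA.eigenvalues i with hμdef
  set Δ : ℕ := Finset.univ.sup fun v => G.degree v with hΔdef
  obtain ⟨v, -, hv⟩ := Finset.exists_mem_eq_sup Finset.univ Finset.univ_nonempty
    fun u => G.degree u
  have hΔ1 : 1 ≤ Δ := by
    have h1 : 0 < G.degree a0 := by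
      rw [G.degree_pos_iff_exists_adj]; exact ⟨b0, hab⟩
    have h2 : G.degree a0 ≤ Δ := Finset.le_sup (f := fun u => G.degree u) (Finset.mem_univ a0)
    omega
  have hΔR : (1:ℝ) ≤ (Δ:ℝ) := by exact_mod_cast hΔ1
  set x : V → ℝ := fun u => if u = v then (Δ:ℝ) else if G.Adj v u then -1 else 0 with hxdef
  have hxv : x v = Δ := by simp [hxdef]
  have hxn : ∀ u, G.Adj v u → x u = -1 := fun u hu => by
    have hne : u ≠ v := fun h => G.irrefl (h ▸ hu)
    simp [hxdef, hne, hu]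
  have hx0 : ∀ u, u ≠ v → ¬ G.Adj v u → x u = 0 := fun u h1 h2 => by
    simp [hxdef, h1, h2]
  have hdegv : (G.neighborFinset v).card = Δ := hv.symm
  -- x ⬝ᵥ x = Δ(Δ+1)
  have hxx : x ⬝ᵥ x = (Δ:ℝ) * ((Δ:ℝ) + 1) := by
    have h0 : x ⬝ᵥ x = ∑ u, x u * x u := rfl
    rw [h0, ← Finset.add_sum_erase Finset.univ _ (Finset.mem_univ v)]
    have h1 : ∑ u ∈ Finset.univ.erase v, x u * x u
        = ∑ u ∈ Finset.univ.erase v, (if G.Adj v u then (1:ℝ) else 0) := by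
      refine Finset.sum_congr rfl fun u hu => ?_
      have hne : u ≠ v := Finset.ne_of_mem_erase hu
      by_cases h : G.Adj v u
      · rw [hxn u h, if_pos h]; ring
      · rw [hx0 u hne h, if_neg h]; ring
    rw [h1, Finset.sum_erase _ (by simp [G.irrefl])]
    rw [Finset.sum_boole, ← SimpleGraph.neighborFinset_eq_filter, hdegv, hxv]
    ring
  -- row sum at v
  have hfv : ∀ j, (if G.Adj v j then (x v - x j)^2 else 0)
      = if G.Adj v j then ((Δ:ℝ)+1)^2 else 0 := fun j => by
    by_cases h : G.Adj v j
    · rw [if_pos h, if_pos h, hxv, hxn j h]; ring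
    · rw [if_neg h, if_neg h]
  have hrow : ∑ j, (if G.Adj v j then (x v - x j)^2 else 0) = (Δ:ℝ) * ((Δ:ℝ)+1)^2 := by
    simp only [hfv]
    rw [← Finset.sum_filter, ← SimpleGraph.neighborFinset_eq_filter, Finset.sum_const, hdegv,
      nsmul_eq_mul]
  -- column sum at v
  have hfc : ∀ i, (if G.Adj i v then (x i - x v)^2 else 0)
      = if G.Adj v i then ((Δ:ℝ)+1)^2 else 0 := fun i => by
    by_cases h : G.Adj v i
    · rw [if_pos h.symm, if_pos h, hxv, hxn i h]; ring
    · rw [if_neg (fun hc => h hc.symm), if_neg h]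
  have hcol : ∑ i, (if G.Adj i v then (x i - x v)^2 else 0) = (Δ:ℝ) * ((Δ:ℝ)+1)^2 := by
    simp only [hfc]
    rw [← Finset.sum_filter, ← SimpleGraph.neighborFinset_eq_filter, Finset.sum_const, hdegv,
      nsmul_eq_mul]
  have hfnn : ∀ i j : V, (0:ℝ) ≤ if G.Adj i j then (x i - x j)^2 else 0 := fun i j => by
    split_ifs; exacts [sq_nonneg _, le_rfl]
  -- lower bound for the double sum
  have hSge : 2*((Δ:ℝ) * ((Δ:ℝ)+1)^2)
      ≤ ∑ i : V, ∑ j : V, (if G.Adj i j then (x i - x j)^2 else 0) := by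
    rw [← Finset.add_sum_erase Finset.univ _ (Finset.mem_univ v)]
    have h1 : ∑ i ∈ Finset.univ.erase v, (if G.Adj i v then (x i - x v)^2 else 0)
        ≤ ∑ i ∈ Finset.univ.erase v, ∑ j, (if G.Adj i j then (x i - x j)^2 else 0) :=
      Finset.sum_le_sum fun i _ =>
        Finset.single_le_sum (fun j _ => hfnn i j) (Finset.mem_univ v)
    have h2 : ∑ i ∈ Finset.univ.erase v, (if G.Adj i v then (x i - x v)^2 else 0)
        = ∑ i, (if G.Adj i v then (x i - x v)^2 else 0) :=
      Finset.sum_erase _ (by simp [G.irrefl])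
    rw [h2, hcol] at h1
    rw [hrow]
    linarith
  have hray := rayleigh_aux hA x
  rw [quadForm_eq, hxx, ← hμdef] at hray
  have hmain1 : (Δ:ℝ) + 1 ≤ μ := by
    nlinarith [hray, hSge, mul_pos (show (0:ℝ) < (Δ:ℝ) by linarith)
      (show (0:ℝ) < (Δ:ℝ)+1 by linarith)]
  refine ⟨hmain1, fun hconn => ⟨fun hμeq => ?_, fun hΔeq => ?_⟩⟩
  · -- forward: equality implies Δ = n - 1
    by_contra hne
    have hvlt : G.degree v < Fintype.card V := G.degree_lt_card_verts v
    have hlt : Δ + 1 < Fintype.card V := by omega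
    set Sf : Finset V := insert v (G.neighborFinset v) with hSf
    have hcard : Sf.card = Δ + 1 := by
      rw [hSf, Finset.card_insert_of_notMem (G.notMem_neighborFinset_self v), hdegv]
    obtain ⟨w, hw⟩ : ∃ w, w ∉ Sf := by
      by_contra hc
      push_neg at hc
      have := Finset.eq_univ_iff_forall.mpr hc
      rw [this, Finset.card_univ] at hcard
      omega
    have hwS : ¬ (w = v ∨ G.Adj v w) := by
      intro h
      apply hw
      rcases h with h | h
      · exact h ▸ Finset.mem_insert_self v _
      · exact Finset.mem_insert_of_mem ((G.mem_neighborFinset v w).mpr h)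
    obtain ⟨p⟩ := hconn.preconnected v w
    obtain ⟨a, ha, b, hb, hadj⟩ :=
      cross_edge {u : V | u = v ∨ G.Adj v u} p (Or.inl rfl) hwS
    simp only [Set.mem_setOf_eq, not_or] at hb
    obtain ⟨hbv, hbadj⟩ := hb
    have hav : G.Adj v a := by
      rcases ha with h | h
      · exact absurd (h ▸ hadj) (fun hc => hbadj hc)
      · exact h
    have hanev : a ≠ v := fun h => G.irrefl (h ▸ hav)
    have hxa : x a = -1 := hxn a hav
    have hxb : x b = 0 := hx0 b hbv hbadj
    -- improved lower bound
    have hSge2 : 2*((Δ:ℝ) * ((Δ:ℝ)+1)^2) + 1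
        ≤ ∑ i : V, ∑ j : V, (if G.Adj i j then (x i - x j)^2 else 0) := by
      rw [← Finset.add_sum_erase Finset.univ _ (Finset.mem_univ v)]
      have hamem : a ∈ Finset.univ.erase v := Finset.mem_erase.mpr ⟨hanev, Finset.mem_univ a⟩
      rw [← Finset.add_sum_erase _ _ hamem]
      -- bound g a from below
      have hga : ((Δ:ℝ)+1)^2 + 1 ≤ ∑ j, (if G.Adj a j then (x a - x j)^2 else 0) := by
        have hsub : ({v, b} : Finset V) ⊆ Finset.univ := Finset.subset_univ _
        have hsum := Finset.sum_le_sum_of_subset_of_nonneg hsub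
          (fun j _ _ => hfnn a j)
        rw [Finset.sum_pair (fun h => hbv h.symm)] at hsum
        have e1 : (if G.Adj a v then (x a - x v)^2 else 0) = ((Δ:ℝ)+1)^2 := by
          rw [if_pos hav.symm, hxa, hxv]; ring
        have e2 : (if G.Adj a b then (x a - x b)^2 else 0) = 1 := by
          rw [if_pos hadj, hxa, hxb]; ring
        rw [e1, e2] at hsum
        exact hsum
      -- bound the rest from below by column sums
      have hrest : (Δ:ℝ) * ((Δ:ℝ)+1)^2 - ((Δ:ℝ)+1)^2
          ≤ ∑ i ∈ (Finset.univ.erase v).erase a, ∑ j, (if G.Adj i j then (x i - x j)^2 else 0) := by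
        have h1 : ∑ i ∈ (Finset.univ.erase v).erase a, (if G.Adj i v then (x i - x v)^2 else 0)
            ≤ ∑ i ∈ (Finset.univ.erase v).erase a, ∑ j, (if G.Adj i j then (x i - x j)^2 else 0) :=
          Finset.sum_le_sum fun i _ =>
            Finset.single_le_sum (fun j _ => hfnn i j) (Finset.mem_univ v)
        have h2 : ∑ i ∈ (Finset.univ.erase v).erase a, (if G.Adj i v then (x i - x v)^2 else 0)
            = (∑ i ∈ Finset.univ.erase v, (if G.Adj i v then (x i - x v)^2 else 0))
              - (if G.Adj a v then (x a - x v)^2 else 0) := by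
          rw [← Finset.add_sum_erase _ _ hamem]; ring
        have h3 : ∑ i ∈ Finset.univ.erase v, (if G.Adj i v then (x i - x v)^2 else 0)
            = ∑ i, (if G.Adj i v then (x i - x v)^2 else 0) :=
          Finset.sum_erase _ (by simp [G.irrefl])
        have e1 : (if G.Adj a v then (x a - x v)^2 else 0) = ((Δ:ℝ)+1)^2 := by
          rw [if_pos hav.symm, hxa, hxv]; ring
        rw [h2, h3, hcol, e1] at h1
        exact h1
      rw [hrow]
      linarith
    rw [hμeq] at hray
    nlinarith [hray, hSge2]
  · -- backward: Δ = n - 1 implies equality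
    have hn1 : 1 ≤ Fintype.card V := Fintype.card_pos
    have hcast : (Δ:ℝ) + 1 = (Fintype.card V : ℝ) := by
      have : Δ + 1 = Fintype.card V := by omega
      exact_mod_cast this
    have hub : μ ≤ (Fintype.card V : ℝ) := ciSup_le fun i => eig_le_card G i
    rw [← hcast] at hub
    linarith
end

section
/- Let G be a connected simple graph on a finite vertex type with at least two vertices. Then the largest eigenvalue μ₁(G) of the Laplacian matrix L(G) satisfies μ₁(G) ≤ max over vertices v of (deg(v) + θ(v)), where θ(v) = (Σ_{u adjacent to v} deg(u)) / deg(v). -/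
open SimpleGraph Matrix Polynomial
open scoped Classical

/-- **Upper bound for the Laplacian spectral radius (Merris-type bound).**
For a connected graph `G` with at least two vertices, the largest Laplacian
eigenvalue satisfies `μ₁(G) ≤ max_v (deg v + θ(v))`, where `θ(v)` is the average
degree of the neighbours of `v`. -/
theorem lapMatrix_spectral_radius_le_max_degree_add_avg_neighbor_degree
    {V : Type*} [Fintype V] [DecidableEq V] (G : SimpleGraph V)
    (hconn : G.Connected) (hcard : 2 ≤ Fintype.card V) :
    (⨆ i, (lapMatrix_isHermitian G).eigenvalues i) ≤
      ⨆ v : V, ((G.degree v : ℝ) +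
        (∑ u ∈ G.neighborFinset v, (G.degree u : ℝ)) / (G.degree v : ℝ)) := by
  have hV : Nonempty V := Fintype.card_pos_iff.mp (by omega)
  -- degrees are positive
  have hdeg : ∀ v : V, 0 < G.degree v := by
    intro v
    rw [G.degree_pos_iff_exists_adj]
    obtain ⟨w, hw⟩ := Fintype.exists_ne_of_one_lt_card (by omega) v
    obtain ⟨p⟩ := hconn v w
    cases p with
    | nil => exact absurd rfl hw.symm
    | cons h _ => exact ⟨_, h⟩
  set d : V → ℝ := fun v => (G.degree v : ℝ) with hd
  have hdpos : ∀ v, 0 < d v := fun v => Nat.cast_pos.mpr (hdeg v)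
  have hdne : ∀ v, d v ≠ 0 := fun v => (hdpos v).ne'
  set L := G.lapMatrix ℝ with hL
  set M : Matrix V V ℝ := diagonal (fun v => (d v)⁻¹) * L * diagonal d with hM
  -- entries of M
  have hMdiag : ∀ k, M k k = d k := by
    intro k
    simp [hM, mul_diagonal, diagonal_mul, hL, lapMatrix, degMatrix]
    change (d k)⁻¹ * d k * d k = d k
    rw [inv_mul_cancel₀ (hdne k), one_mul]
  have hMoff : ∀ k j, j ≠ k → M k j = -(if G.Adj k j then (d j) / (d k) else 0) := by
    intro k j hjk
    simp only [hM, mul_diagonal, diagonal_mul, hL, lapMatrix, Matrix.sub_apply, degMatrix,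
      adjMatrix_apply, diagonal_apply_ne' _ hjk]
    split <;> ring
  -- each eigenvalue is an eigenvalue of toLin' M
  refine ciSup_le fun i => ?_
  set μ := (lapMatrix_isHermitian G).eigenvalues i with hmu
  have hx : L *ᵥ ⇑((lapMatrix_isHermitian G).eigenvectorBasis i) =
      μ • ⇑((lapMatrix_isHermitian G).eigenvectorBasis i) :=
    (lapMatrix_isHermitian G).mulVec_eigenvectorBasis i
  set x : V → ℝ := ⇑((lapMatrix_isHermitian G).eigenvectorBasis i) with hxdef
  have hxne : x ≠ 0 := by
    have := (lapMatrix_isHermitian G).eigenvectorBasis.orthonormal.ne_zero i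
    intro h
    apply this
    ext v
    exact congrFun h v
  set w : V → ℝ := diagonal (fun v => (d v)⁻¹) *ᵥ x with hw
  have hwne : w ≠ 0 := by
    intro h
    apply hxne
    ext v
    have := congrFun h v
    simp only [hw, mulVec_diagonal, Pi.zero_apply] at this ⊢
    exact (mul_eq_zero.mp this).resolve_left (inv_ne_zero (hdne v))
  have hMw : M *ᵥ w = μ • w := by
    have hDw : diagonal d *ᵥ w = x := by
      ext v
      simp [hw, mulVec_diagonal, mul_inv_cancel_left₀ (hdne v)]
    rw [hM, ← mulVec_mulVec, ← mulVec_mulVec, hDw, hx]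
    ext v
    simp only [mulVec_diagonal, hw, Pi.smul_apply, smul_eq_mul]
    ring
  have heig : Module.End.HasEigenvalue (Matrix.toLin' M) μ :=
    Module.End.hasEigenvalue_of_hasEigenvector
      ⟨Module.End.mem_eigenspace_iff.mpr (by simpa [Matrix.toLin'_apply] using hMw), hwne⟩
  obtain ⟨k, hk⟩ := eigenvalue_mem_ball heig
  rw [Metric.mem_closedBall, Real.dist_eq] at hk
  have hsum : ∑ j ∈ Finset.univ.erase k, ‖M k j‖ =
      (∑ u ∈ G.neighborFinset k, (G.degree u : ℝ)) / (G.degree k : ℝ) := by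
    have h1 : ∀ j ∈ Finset.univ.erase k, ‖M k j‖ = if G.Adj k j then d j / d k else 0 := by
      intro j hj
      rw [hMoff k j (Finset.mem_erase.mp hj).1, norm_neg]
      split
      · exact abs_of_nonneg (div_nonneg (hdpos _).le (hdpos k).le)
      · simp
    rw [Finset.sum_congr rfl h1, Finset.sum_erase _ (by simp [G.irrefl]),
      ← Finset.sum_filter, ← neighborFinset_eq_filter, Finset.sum_div]
  have hbound : μ ≤ (G.degree k : ℝ) + (∑ u ∈ G.neighborFinset k, (G.degree u : ℝ)) / (G.degree k : ℝ) := by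
    rw [hMdiag k, hsum] at hk
    have := (abs_le.mp hk).2
    have hdk : d k = (G.degree k : ℝ) := rfl
    linarith
  exact hbound.trans (le_ciSup (f := fun v : V => ((G.degree v : ℝ) +
    (∑ u ∈ G.neighborFinset v, (G.degree u : ℝ)) / (G.degree v : ℝ)))
    (Set.Finite.bddAbove (Set.finite_range _)) k)
end

section
/- Let G be a simple graph on a finite vertex type with n vertices, m edges, degree sequence d₁, …, dₙ, and t triangles, and let φ(x) = det(x·I − L(G)) be the characteristic polynomial of its Laplacian matrix. Then the coefficient of x^(n−1) in φ is −2m; the coefficient of x^(n−2) is 2m² − m − (1/2)·Σᵢ dᵢ²; and the coefficient of x^(n−3) is (1/3)·(−4m³ + 6m² + 3m·Σᵢ dᵢ² − Σᵢ dᵢ³ − 3·Σᵢ dᵢ² + 6t). -/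
open SimpleGraph Matrix Polynomial
open scoped Classical

section AuxNewton

open Multiset

lemma aux_esymm_cons (a : ℝ) (s : Multiset ℝ) (n : ℕ) :
    (a ::ₘ s).esymm (n+1) = a * s.esymm n + s.esymm (n+1) := by
  simp [Multiset.esymm, Multiset.powersetCard_cons, Multiset.sum_map_mul_left, add_comm]

/-- Power sum of a multiset. -/
def auxPk (s : Multiset ℝ) (k : ℕ) : ℝ := (s.map (· ^ k)).sum

lemma auxPk_cons (a : ℝ) (s : Multiset ℝ) (k : ℕ) : auxPk (a ::ₘ s) k = a ^ k + auxPk s k := by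
  simp [auxPk]

lemma aux_esymm1 (s : Multiset ℝ) : s.esymm 1 = auxPk s 1 := by
  induction s using Multiset.induction with
  | empty => simp [Multiset.esymm, auxPk, Multiset.powersetCard_zero_right]
  | cons a s ih =>
    rw [aux_esymm_cons, auxPk_cons, ih]
    simp [Multiset.esymm, auxPk]

lemma aux_esymm2 (s : Multiset ℝ) : 2 * s.esymm 2 = auxPk s 1 ^ 2 - auxPk s 2 := by
  induction s using Multiset.induction with
  | empty => simp [Multiset.esymm, auxPk, Multiset.powersetCard_zero_right]
  | cons a s ih =>
    rw [aux_esymm_cons, auxPk_cons, auxPk_cons, aux_esymm1]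
    ring_nf
    ring_nf at ih
    linarith [ih]

lemma aux_esymm3 (s : Multiset ℝ) :
    6 * s.esymm 3 = auxPk s 1 ^ 3 - 3 * auxPk s 1 * auxPk s 2 + 2 * auxPk s 3 := by
  induction s using Multiset.induction with
  | empty => simp [Multiset.esymm, auxPk, Multiset.powersetCard_zero_right]
  | cons a s ih =>
    rw [aux_esymm_cons, auxPk_cons, auxPk_cons, auxPk_cons]
    simp only [Nat.reduceAdd]
    have h2 := aux_esymm2 s
    have h1 := aux_esymm1 s
    linear_combination ih + 3 * a * h2

end AuxNewton

section AuxCharpoly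

variable {n : Type*} [Fintype n] [DecidableEq n] {R : Type*} [CommRing R]

lemma aux_charmatrix_conj (P Q M : Matrix n n R) (h1 : P * Q = 1) :
    charmatrix (P * M * Q) = P.map C * charmatrix M * Q.map C := by
  have hmap : ∀ (A B : Matrix n n R), (A * B).map (C : R →+* R[X]) = A.map C * B.map C := by
    intro A B; exact Matrix.map_mul
  have hPQ : (P.map (C : R →+* R[X])) * Q.map C = 1 := by
    rw [← hmap, h1]; simp
  have hd : charmatrix M = Matrix.scalar n (X : R[X]) - M.map C := rfl
  rw [hd]
  have hd2 : charmatrix (P * M * Q) = Matrix.scalar n (X : R[X]) - (P * M * Q).map C := rfl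
  rw [hd2, hmap, hmap]
  rw [mul_sub, sub_mul]
  congr 1
  rw [mul_assoc]
  rw [(Matrix.scalar_commute (X : R[X]) (fun r => Commute.all _ _) (Q.map C)).eq]
  rw [← mul_assoc, hPQ, one_mul]

lemma aux_charpoly_conj (P Q M : Matrix n n R) (h1 : P * Q = 1) (h2 : Q * P = 1) :
    (P * M * Q).charpoly = M.charpoly := by
  rw [Matrix.charpoly, aux_charmatrix_conj P Q M h1, det_mul, det_mul, mul_comm, ← mul_assoc]
  rw [← det_mul, ← Matrix.map_mul, h2]
  simp [Matrix.charpoly]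

lemma aux_charpoly_diag (d : n → R) :
    (Matrix.diagonal d).charpoly = ∏ i, (X - C (d i)) := by
  have : charmatrix (Matrix.diagonal d) = Matrix.diagonal (fun i => X - C (d i)) := by
    ext i j
    by_cases h : i = j
    · subst h; simp [charmatrix_apply_eq]
    · simp [charmatrix_apply_ne _ _ _ h, Matrix.diagonal_apply_ne _ h]
  rw [Matrix.charpoly, this, det_diagonal]

lemma aux_conj_diag_facts (A U W : Matrix n n R) (μ : n → R)
    (h1 : U * W = 1) (h2 : W * U = 1)
    (hspec : A = U * Matrix.diagonal μ * W) :
    A.charpoly = ∏ i, (X - C (μ i)) ∧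
    (∀ k : ℕ, (A ^ (k+1)).trace = ∑ i, μ i ^ (k+1)) := by
  constructor
  · rw [hspec, aux_charpoly_conj _ _ _ h1 h2, aux_charpoly_diag]
  · intro k
    have hpow : A ^ (k+1) = U * (Matrix.diagonal μ) ^ (k+1) * W := by
      induction k with
      | zero => simpa using hspec
      | succ m ih =>
        rw [pow_succ, ih, hspec]
        calc U * Matrix.diagonal μ ^ (m + 1) * W *
              (U * Matrix.diagonal μ * W)
            = U * (Matrix.diagonal μ ^ (m + 1) * (W * U) *
              Matrix.diagonal μ) * W := by
              simp only [Matrix.mul_assoc]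
          _ = U * Matrix.diagonal μ ^ (m + 2) * W := by
              rw [h2, Matrix.mul_one, ← pow_succ]
    rw [hpow, Matrix.trace_mul_cycle, h2, Matrix.one_mul,
      Matrix.diagonal_pow, Matrix.trace_diagonal]
    simp

lemma aux_herm_main (A : Matrix n n ℝ) (hA : A.IsHermitian) :
    A.charpoly = ∏ i, (X - C (hA.eigenvalues i)) ∧
    (∀ k : ℕ, (A ^ (k+1)).trace = ∑ i, hA.eigenvalues i ^ (k+1)) := by
  refine aux_conj_diag_facts A (hA.eigenvectorUnitary : Matrix n n ℝ)
    (star (hA.eigenvectorUnitary : Matrix n n ℝ)) hA.eigenvalues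
    ((Matrix.mem_unitaryGroup_iff).mp hA.eigenvectorUnitary.2)
    ((Matrix.mem_unitaryGroup_iff').mp hA.eigenvectorUnitary.2) ?_
  have := hA.spectral_theorem
  simpa using this

end AuxCharpoly

section AuxTraces

open Finset

variable {V : Type*} [Fintype V] [DecidableEq V] (G : SimpleGraph V) [DecidableRel G.Adj]

lemma aux_diag_mul_trace (e : V → ℝ) (M : Matrix V V ℝ) :
    (Matrix.diagonal e * M).trace = ∑ i, e i * M i i := by
  simp [Matrix.trace, Matrix.mul_apply, Matrix.diagonal_apply, Finset.sum_ite_eq]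

lemma aux_trace_adj_sq : ((G.adjMatrix ℝ) * (G.adjMatrix ℝ)).trace = ∑ v, (G.degree v : ℝ) := by
  unfold Matrix.trace
  exact Finset.sum_congr rfl fun i _ => G.adjMatrix_mul_self_apply_self i

lemma aux_trace_adj_cube :
    ((G.adjMatrix ℝ) * (G.adjMatrix ℝ) * (G.adjMatrix ℝ)).trace
      = 6 * ((G.cliqueFinset 3).card : ℝ) := by
  have h1 : ((G.adjMatrix ℝ) * (G.adjMatrix ℝ) * (G.adjMatrix ℝ)).trace
      = ∑ p : V × V × V, (if G.Adj p.1 p.2.1 ∧ G.Adj p.2.1 p.2.2 ∧ G.Adj p.2.2 p.1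
          then (1:ℝ) else 0) := by
    rw [Fintype.sum_prod_type]
    simp only [Fintype.sum_prod_type]
    simp only [Matrix.trace, Matrix.diag_apply, Matrix.mul_apply, Finset.sum_mul, ite_and,
      mul_ite, mul_one, mul_zero, adjMatrix_apply, ite_mul, zero_mul, one_mul]
    refine Finset.sum_congr rfl fun x _ => Finset.sum_congr rfl fun y _ => ?_
    simp only [G.adj_comm y x]
    by_cases h : G.Adj x y <;> simp only [h, if_true, if_false]
    · refine Finset.sum_congr rfl fun z _ => ?_
      simp only [G.adj_comm z y, G.adj_comm x z]
    · simp
  rw [h1, Finset.sum_boole]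
  have h2 : (Finset.univ.filter (fun p : V × V × V =>
      G.Adj p.1 p.2.1 ∧ G.Adj p.2.1 p.2.2 ∧ G.Adj p.2.2 p.1)).card
      = 6 * (G.cliqueFinset 3).card := by
    rw [Finset.card_eq_sum_card_fiberwise
      (f := fun p : V × V × V => ({p.1, p.2.1, p.2.2} : Finset V)) (t := G.cliqueFinset 3) ?_]
    · rw [Finset.sum_congr rfl (g := fun _ => 6) ?_]
      · rw [Finset.sum_const, smul_eq_mul, mul_comm]
      · intro s hs
        obtain ⟨a, b, c, hab, hac, hbc, rfl⟩ :=
          is3Clique_iff.mp (SimpleGraph.mem_cliqueFinset_iff.mp hs)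
        have hset : Finset.univ.filter (fun p : V × V × V =>
            (G.Adj p.1 p.2.1 ∧ G.Adj p.2.1 p.2.2 ∧ G.Adj p.2.2 p.1) ∧
            ({p.1, p.2.1, p.2.2} : Finset V) = {a, b, c})
            = {(a,b,c),(a,c,b),(b,a,c),(b,c,a),(c,a,b),(c,b,a)} := by
          ext ⟨x, y, z⟩
          simp only [Finset.mem_filter, Finset.mem_univ, true_and, Finset.mem_insert,
            Finset.mem_singleton, Prod.mk.injEq]
          constructor
          · rintro ⟨⟨hxy, hyz, hzx⟩, hs⟩
            have hx : x ∈ ({a,b,c} : Finset V) := by rw [← hs]; simp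
            have hy : y ∈ ({a,b,c} : Finset V) := by rw [← hs]; simp
            have hz : z ∈ ({a,b,c} : Finset V) := by rw [← hs]; simp
            simp only [Finset.mem_insert, Finset.mem_singleton] at hx hy hz
            have d1 := hxy.ne
            have d2 := hyz.ne
            have d3 := hzx.ne
            rcases hx with rfl|rfl|rfl <;> rcases hy with rfl|rfl|rfl <;>
              rcases hz with rfl|rfl|rfl <;> simp_all
          · rintro (⟨rfl,rfl,rfl⟩|⟨rfl,rfl,rfl⟩|⟨rfl,rfl,rfl⟩|⟨rfl,rfl,rfl⟩|⟨rfl,rfl,rfl⟩|⟨rfl,rfl,rfl⟩)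
            · exact ⟨⟨hab, hbc, hac.symm⟩, rfl⟩
            · exact ⟨⟨hac, hbc.symm, hab.symm⟩, by ext w; simp; tauto⟩
            · exact ⟨⟨hab.symm, hac, hbc.symm⟩, by ext w; simp; tauto⟩
            · exact ⟨⟨hbc, hac.symm, hab⟩, by ext w; simp; tauto⟩
            · exact ⟨⟨hac.symm, hab, hbc⟩, by ext w; simp; tauto⟩
            · exact ⟨⟨hbc.symm, hab.symm, hac⟩, by ext w; simp; tauto⟩
        rw [Finset.filter_filter, hset]
        have dab := hab.ne
        have dac := hac.ne
        have dbc := hbc.ne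
        show _ = 6
        repeat rw [Finset.card_insert_of_notMem (by simp [Prod.ext_iff]; tauto)]
        simp
    · intro p hp
      simp only [Finset.coe_filter, Set.mem_setOf_eq, Finset.mem_filter, Finset.mem_univ, true_and] at hp
      rw [Finset.mem_coe, SimpleGraph.mem_cliqueFinset_iff, is3Clique_triple_iff]
      exact ⟨hp.1, hp.2.2.symm, hp.2.1⟩
  rw [h2]
  push_cast
  ring

lemma aux_trace_lap1 : (G.lapMatrix ℝ).trace = ∑ v, (G.degree v : ℝ) := by
  simp [lapMatrix, degMatrix, Matrix.trace_sub, Matrix.trace_diagonal]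

lemma aux_trace_DA : ((G.degMatrix ℝ) * (G.adjMatrix ℝ)).trace = 0 := by
  rw [degMatrix, aux_diag_mul_trace]
  simp

lemma aux_trace_lap2 : ((G.lapMatrix ℝ) ^ 2).trace
    = ∑ v, (G.degree v : ℝ) ^ 2 + ∑ v, (G.degree v : ℝ) := by
  set D := G.degMatrix ℝ
  set A := G.adjMatrix ℝ
  have hexp : (G.lapMatrix ℝ) ^ 2 = D * D - D * A - A * D + A * A := by
    rw [lapMatrix]; noncomm_ring
  rw [hexp, Matrix.trace_add, Matrix.trace_sub, Matrix.trace_sub, aux_trace_DA,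
    Matrix.trace_mul_comm A D, aux_trace_DA, aux_trace_adj_sq]
  have : (D * D).trace = ∑ v, (G.degree v : ℝ) ^ 2 := by
    rw [show D = Matrix.diagonal (fun v => (G.degree v : ℝ)) from rfl,
      Matrix.diagonal_mul_diagonal, Matrix.trace_diagonal]
    simp [sq]
  rw [this]; ring

lemma aux_trace_lap3 : ((G.lapMatrix ℝ) ^ 3).trace
    = ∑ v, (G.degree v : ℝ) ^ 3 + 3 * ∑ v, (G.degree v : ℝ) ^ 2
      - 6 * ((G.cliqueFinset 3).card : ℝ) := by
  set D := G.degMatrix ℝ with hD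
  set A := G.adjMatrix ℝ with hA
  have hexp : (G.lapMatrix ℝ) ^ 3 = D * D * D - D * D * A - D * A * D + D * (A * A)
      - A * (D * D) + A * D * A + A * A * D - A * A * A := by
    rw [lapMatrix]; noncomm_ring
  have hDdiag : D = Matrix.diagonal (fun v => (G.degree v : ℝ)) := rfl
  have h1 : (D * D * D).trace = ∑ v, (G.degree v : ℝ) ^ 3 := by
    rw [hDdiag, Matrix.diagonal_mul_diagonal, Matrix.diagonal_mul_diagonal,
      Matrix.trace_diagonal]
    exact Finset.sum_congr rfl fun i _ => by ring
  have h2 : (D * D * A).trace = 0 := by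
    rw [hDdiag, Matrix.diagonal_mul_diagonal, aux_diag_mul_trace]
    simp [hA]
  have h3 : (D * A * D).trace = 0 := by
    rw [Matrix.trace_mul_cycle]
    exact h2
  have h4 : (D * (A * A)).trace = ∑ v, (G.degree v : ℝ) ^ 2 := by
    rw [hDdiag, aux_diag_mul_trace]
    refine Finset.sum_congr rfl fun i _ => ?_
    rw [G.adjMatrix_mul_self_apply_self i]; ring
  have h5 : (A * (D * D)).trace = 0 := by
    rw [Matrix.trace_mul_comm]
    exact h2
  have h6 : (A * D * A).trace = (D * (A * A)).trace := by
    rw [Matrix.trace_mul_cycle, Matrix.trace_mul_comm]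
  have h7 : (A * A * D).trace = (D * (A * A)).trace := by
    rw [Matrix.trace_mul_comm]
  rw [hexp]
  simp only [Matrix.trace_add, Matrix.trace_sub, h1, h2, h3, h4, h5, h6, h7,
    (show (A * A * A).trace = 6 * ((G.cliqueFinset 3).card : ℝ) from aux_trace_adj_cube G)]
  ring

end AuxTraces

/-- **The first coefficients of the Laplacian characteristic polynomial.**
For a graph `G` with `n ≥ 3` vertices, `m` edges, degrees `dᵢ` and `t` triangles,
the characteristic polynomial `φ` of `L(G)` satisfies
`φ.coeff (n−1) = −2m`, `φ.coeff (n−2) = 2m² − m − (1/2)Σdᵢ²`, and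
`φ.coeff (n−3) = (1/3)(−4m³ + 6m² + 3mΣdᵢ² − Σdᵢ³ − 3Σdᵢ² + 6t)`. -/
theorem lapMatrix_charpoly_coeffs
    {V : Type*} [Fintype V] [DecidableEq V] (G : SimpleGraph V)
    (hn : 3 ≤ Fintype.card V) :
    ((G.lapMatrix ℝ).charpoly.coeff (Fintype.card V - 1) =
        -(2 * (G.edgeFinset.card : ℝ))) ∧
      ((G.lapMatrix ℝ).charpoly.coeff (Fintype.card V - 2) =
        2 * (G.edgeFinset.card : ℝ) ^ 2 - (G.edgeFinset.card : ℝ) -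
          (1 / 2) * (∑ v : V, (G.degree v : ℝ) ^ 2)) ∧
      ((G.lapMatrix ℝ).charpoly.coeff (Fintype.card V - 3) =
        (1 / 3) * (-(4 * (G.edgeFinset.card : ℝ) ^ 3) + 6 * (G.edgeFinset.card : ℝ) ^ 2 +
          3 * (G.edgeFinset.card : ℝ) * (∑ v : V, (G.degree v : ℝ) ^ 2) -
          (∑ v : V, (G.degree v : ℝ) ^ 3) - 3 * (∑ v : V, (G.degree v : ℝ) ^ 2) +
          6 * ((G.cliqueFinset 3).card : ℝ))) := by
  set n := Fintype.card V with hnn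
  set L := G.lapMatrix ℝ with hL
  have hH : L.IsHermitian := by
    rw [Matrix.IsHermitian, Matrix.conjTranspose_eq_transpose_of_trivial]
    exact G.isSymm_lapMatrix ℝ
  obtain ⟨hchar, htr⟩ := aux_herm_main L hH
  set μ := hH.eigenvalues with hμ
  set s : Multiset ℝ := Finset.univ.val.map μ with hs
  have hcard : Multiset.card s = n := by simp [hs, hnn]
  have hchar' : L.charpoly = (s.map fun t => X - C t).prod := by
    rw [hchar, hs, Multiset.map_map]
    rfl
  have hpk : ∀ k : ℕ, auxPk s k = ∑ i, μ i ^ k := by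
    intro k
    rw [auxPk, hs, Multiset.map_map]
    rfl
  -- values of the power sums
  have hm : ∑ v, (G.degree v : ℝ) = 2 * (G.edgeFinset.card : ℝ) := by
    have := G.sum_degrees_eq_twice_card_edges
    exact_mod_cast this
  set m : ℝ := (G.edgeFinset.card : ℝ)
  set S2 : ℝ := ∑ v, (G.degree v : ℝ) ^ 2
  set S3 : ℝ := ∑ v, (G.degree v : ℝ) ^ 3
  set T : ℝ := ((G.cliqueFinset 3).card : ℝ)
  have hP1 : auxPk s 1 = 2 * m := by
    rw [hpk, ← htr 0, pow_one, aux_trace_lap1, hm]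
  have hP2 : auxPk s 2 = S2 + 2 * m := by
    rw [hpk, ← htr 1, aux_trace_lap2, hm]
  have hP3 : auxPk s 3 = S3 + 3 * S2 - 6 * T := by
    rw [hpk, ← htr 2, aux_trace_lap3]
  have hco : ∀ k : ℕ, k ≤ n → L.charpoly.coeff k = (-1 : ℝ) ^ (n - k) * s.esymm (n - k) := by
    intro k hk
    rw [hchar', Multiset.prod_X_sub_C_coeff s (by rw [hcard]; exact hk), hcard]
  refine ⟨?_, ?_, ?_⟩
  · rw [hco (n-1) (by omega), show n - (n-1) = 1 by omega, aux_esymm1, hP1]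
    ring
  · have h2 := aux_esymm2 s
    rw [hP1, hP2] at h2
    rw [hco (n-2) (by omega), show n - (n-2) = 2 by omega]
    linear_combination ((-1:ℝ))^2 / 2 * h2
  · have h3 := aux_esymm3 s
    rw [hP1, hP2, hP3] at h3
    rw [hco (n-3) (by omega), show n - (n-3) = 3 by omega]
    linear_combination ((-1:ℝ))^3 / 6 * h3
end

section
/- Let G be a connected unicyclic bipartite simple graph on a finite vertex type with n vertices (so G has exactly n edges and is 2-colorable). Then the characteristic polynomial of the adjacency matrix of the line graph of G equals the characteristic polynomial of the Laplacian matrix L(G) composed with X + 2; equivalently, the Laplacian eigenvalues μ₁ ≥ … ≥ μ_{n−1} > μₙ = 0 of G satisfy μᵢ = λᵢ(𝓛(G)) + 2 for i = 1, …, n, where λᵢ(𝓛(G)) are the adjacency eigenvalues of the line graph in non-increasing order. -/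
open SimpleGraph Matrix Polynomial
open scoped Classical

lemma det_smul_one_sub_eq {K : Type*} [Field K] {p : Type*} [Fintype p] [DecidableEq p]
    {t : K} (ht0 : t ≠ 0) (M : Matrix p p K) :
    det (t • (1 : Matrix p p K) - M) = t ^ Fintype.card p * det (1 - t⁻¹ • M) := by
  rw [← det_smul, smul_sub, smul_smul, mul_inv_cancel₀ ht0, one_smul]

lemma charpoly_map_frac {p : Type*} [Fintype p] [DecidableEq p]
    (M : Matrix p p ℝ) :
    algebraMap ℝ[X] (FractionRing ℝ[X]) M.charpoly =
      det ((algebraMap ℝ[X] (FractionRing ℝ[X]) X) • (1 : Matrix p p (FractionRing ℝ[X]))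
        - M.map ⇑((algebraMap ℝ[X] (FractionRing ℝ[X])).comp (C : ℝ →+* ℝ[X]))) := by
  rw [Matrix.charpoly, RingHom.map_det]
  congr 1
  ext i j
  by_cases h : i = j
  · subst h
    simp [charmatrix_apply_eq, Matrix.map_apply, Matrix.smul_apply, Matrix.one_apply,
      map_sub, smul_eq_mul, mul_one, Algebra.smul_def, Matrix.algebraMap_matrix_apply]
  · simp [charmatrix_apply_ne _ _ _ h, Matrix.map_apply, Matrix.smul_apply,
      Matrix.one_apply_ne h, map_neg]

lemma charpoly_mul_comm_of_card_eq {m n : Type*} [Fintype m] [Fintype n]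
    [DecidableEq m] [DecidableEq n] (h : Fintype.card m = Fintype.card n)
    (A : Matrix m n ℝ) (B : Matrix n m ℝ) :
    (A * B).charpoly = (B * A).charpoly := by
  set K := FractionRing ℝ[X]
  have hinj : Function.Injective (algebraMap ℝ[X] K) := IsFractionRing.injective _ _
  apply hinj
  set t : K := algebraMap ℝ[X] K X with ht
  have ht0 : t ≠ 0 := by
    rw [ht]
    simp only [ne_eq, map_eq_zero_iff _ hinj]
    exact X_ne_zero
  set ψ : ℝ →+* K := (algebraMap ℝ[X] K).comp (C : ℝ →+* ℝ[X]) with hψ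
  have hA : (A * B).map ⇑ψ = A.map ⇑ψ * B.map ⇑ψ := Matrix.map_mul
  have hB : (B * A).map ⇑ψ = B.map ⇑ψ * A.map ⇑ψ := Matrix.map_mul
  rw [charpoly_map_frac, charpoly_map_frac, ← ht, ← hψ, hA, hB,
    det_smul_one_sub_eq ht0, det_smul_one_sub_eq ht0, h]
  congr 1
  have h1 : t⁻¹ • (A.map ⇑ψ * B.map ⇑ψ) = (t⁻¹ • A.map ⇑ψ) * B.map ⇑ψ :=
    (Matrix.smul_mul _ _ _).symm
  have h2 : t⁻¹ • (B.map ⇑ψ * A.map ⇑ψ) = B.map ⇑ψ * (t⁻¹ • A.map ⇑ψ) :=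
    (Matrix.mul_smul _ _ _).symm
  rw [h1, h2, Matrix.det_one_sub_mul_comm]


lemma charpoly_add_smul_one_comp {p : Type*} [Fintype p] [DecidableEq p]
    (M : Matrix p p ℝ) (c : ℝ) :
    (M + c • (1 : Matrix p p ℝ)).charpoly.comp (X + C c) = M.charpoly := by
  have hcomp : ((M + c • (1 : Matrix p p ℝ)).charpoly).comp (X + C c)
      = aeval ((X : ℝ[X]) + C c) (M + c • (1 : Matrix p p ℝ)).charpoly := by
    rw [Polynomial.aeval_def, Polynomial.comp, Polynomial.algebraMap_eq]
  rw [hcomp, Matrix.charpoly, Matrix.charpoly, ← AlgHom.coe_toRingHom, RingHom.map_det]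
  congr 1
  ext i j : 2
  by_cases h : i = j
  · subst h
    simp only [charmatrix_apply_eq, RingHom.mapMatrix_apply, Matrix.map_apply,
      AlgHom.coe_toRingHom, map_sub, aeval_X, aeval_C, Matrix.add_apply,
      Matrix.smul_apply, Matrix.one_apply_eq, smul_eq_mul, mul_one, map_add, Polynomial.algebraMap_eq]
    ring
  · simp only [charmatrix_apply_ne _ _ _ h, RingHom.mapMatrix_apply, Matrix.map_apply,
      AlgHom.coe_toRingHom, map_neg, aeval_C, Matrix.add_apply, Matrix.smul_apply,
      Matrix.one_apply_ne h, smul_eq_mul, mul_zero, add_zero, Polynomial.algebraMap_eq]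


section Inc
variable {V : Type*} [Fintype V] [DecidableEq V] (G : SimpleGraph V)

noncomputable def sIncMatrix (c : G.Coloring (Fin 2)) : Matrix V G.edgeSet ℝ :=
  Matrix.of fun v e => if v ∈ (e : Sym2 V) then (if c v = 0 then 1 else -1) else 0

lemma sIncMatrix_mul_transpose (c : G.Coloring (Fin 2)) :
    sIncMatrix G c * (sIncMatrix G c)ᵀ = G.lapMatrix ℝ := by
  ext u w
  rw [Matrix.mul_apply]
  simp only [Matrix.transpose_apply]
  by_cases huw : u = w
  · subst huw
    have hterm : ∀ e : G.edgeSet, sIncMatrix G c u e * sIncMatrix G c u e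
        = if u ∈ (e : Sym2 V) then (1:ℝ) else 0 := by
      intro e
      simp only [sIncMatrix, Matrix.of_apply]
      by_cases h : u ∈ (e : Sym2 V) <;> by_cases hc : c u = 0 <;> simp [h, hc]
    rw [Finset.sum_congr rfl fun e _ => hterm e, Finset.sum_boole]
    have hcard : (Finset.univ.filter fun e : G.edgeSet => u ∈ (e : Sym2 V)).card
        = G.degree u := by
      rw [← SimpleGraph.card_incidenceSet_eq_degree, ← Fintype.card_subtype]
      apply Fintype.card_congr
      exact (Equiv.subtypeSubtypeEquivSubtypeInter (· ∈ G.edgeSet) (u ∈ ·))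
    rw [hcard]
    simp [SimpleGraph.lapMatrix, SimpleGraph.degMatrix]
  · have hterm : ∀ e : G.edgeSet, sIncMatrix G c u e * sIncMatrix G c w e
        = if (e : Sym2 V) = s(u, w) then
            (if c u = 0 then (1:ℝ) else -1) * (if c w = 0 then 1 else -1) else 0 := by
      intro e
      simp only [sIncMatrix, Matrix.of_apply]
      by_cases h : (e : Sym2 V) = s(u, w)
      · have hu : u ∈ (e : Sym2 V) := by rw [h]; exact Sym2.mem_mk_left u w
        have hw : w ∈ (e : Sym2 V) := by rw [h]; exact Sym2.mem_mk_right u w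
        simp [h, hu, hw]
      · have : ¬(u ∈ (e : Sym2 V) ∧ w ∈ (e : Sym2 V)) := fun hc =>
          h ((Sym2.mem_and_mem_iff huw).mp hc)
        by_cases hu : u ∈ (e : Sym2 V)
        · have hw : w ∉ (e : Sym2 V) := fun hw => this ⟨hu, hw⟩
          simp [h, hu, hw]
        · simp [h, hu]
    rw [Finset.sum_congr rfl fun e _ => hterm e]
    by_cases hadj : G.Adj u w
    · have he : s(u, w) ∈ G.edgeSet := (SimpleGraph.mem_edgeSet G).mpr hadj
      have hterm2 : ∀ e : G.edgeSet, ((e : Sym2 V) = s(u, w)) ↔ e = ⟨s(u, w), he⟩ :=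
        fun e => ⟨fun h => Subtype.ext h, fun h => congrArg Subtype.val h⟩
      simp only [hterm2]
      rw [Finset.sum_ite_eq' Finset.univ (⟨s(u, w), he⟩ : G.edgeSet)]
      have hne := c.valid hadj
      have hσ : (if c u = 0 then (1:ℝ) else -1) * (if c w = 0 then 1 else -1) = -1 := by
        have h2 : (c u = 0) ↔ ¬(c w = 0) := by
          revert hne; generalize c u = a; generalize c w = b; revert a b; decide
        by_cases hc : c u = 0
        · simp [hc, (h2.mp hc)]
        · have : c w = 0 := by
            by_contra hw; exact hc (h2.mpr hw)
          simp [hc, this]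
      simp [hσ, SimpleGraph.lapMatrix, SimpleGraph.degMatrix, Matrix.diagonal_apply_ne _ huw,
        hadj]
    · have : ∀ e : G.edgeSet, (if (e : Sym2 V) = s(u, w) then
          (if c u = 0 then (1:ℝ) else -1) * (if c w = 0 then 1 else -1) else 0) = 0 := by
        intro e
        have : (e : Sym2 V) ≠ s(u, w) := fun h => hadj ((SimpleGraph.mem_edgeSet G).mp
          (h ▸ e.2))
        simp [this]
      rw [Finset.sum_congr rfl fun e _ => this e]
      simp [SimpleGraph.lapMatrix, SimpleGraph.degMatrix, Matrix.diagonal_apply_ne _ huw, hadj]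

lemma sIncMatrix_transpose_mul (c : G.Coloring (Fin 2)) :
    (sIncMatrix G c)ᵀ * sIncMatrix G c
      = G.lineGraph.adjMatrix ℝ + (2:ℝ) • (1 : Matrix G.edgeSet G.edgeSet ℝ) := by
  ext e f
  rw [Matrix.mul_apply]
  simp only [Matrix.transpose_apply]
  have hterm : ∀ v : V, sIncMatrix G c v e * sIncMatrix G c v f
      = if v ∈ (e : Sym2 V) ∧ v ∈ (f : Sym2 V) then (1:ℝ) else 0 := by
    intro v
    simp only [sIncMatrix, Matrix.of_apply]
    by_cases he : v ∈ (e : Sym2 V) <;> by_cases hf : v ∈ (f : Sym2 V) <;>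
      by_cases hc : c v = 0 <;> simp [he, hf, hc]
  rw [Finset.sum_congr rfl fun v _ => hterm v, Finset.sum_boole]
  by_cases hef : e = f
  · subst hef
    have hd : ¬ (e : Sym2 V).IsDiag := G.not_isDiag_of_mem_edgeSet e.2
    have hpair : ∀ z : Sym2 V, ∃ a b, z = s(a, b) :=
      fun z => Sym2.ind (fun a b => ⟨a, b, rfl⟩) z
    obtain ⟨a, b, habe⟩ := hpair (e : Sym2 V)
    have hab : a ≠ b := fun h => hd (habe ▸ (Sym2.mk_isDiag_iff.mpr h))
    have hfil : (Finset.univ.filter fun v => v ∈ (e : Sym2 V) ∧ v ∈ (e : Sym2 V))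
        = ({a, b} : Finset V) := by
      ext v
      simp [habe, Sym2.mem_iff]
    rw [hfil, Finset.card_pair hab]
    simp [Matrix.one_apply_eq]
  · by_cases hadj : G.lineGraph.Adj e f
    · obtain ⟨hne, v0, hv0e, hv0f⟩ := (SimpleGraph.lineGraph_adj_iff_exists).mp hadj
      have hfil : (Finset.univ.filter fun v => v ∈ (e : Sym2 V) ∧ v ∈ (f : Sym2 V))
          = {v0} := by
        ext v
        simp only [Finset.mem_filter, Finset.mem_univ, true_and, Finset.mem_singleton]
        constructor
        · rintro ⟨hve, hvf⟩
          by_contra hne'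
          exact hef (Subtype.ext (Sym2.eq_of_ne_mem hne' hve hv0e hvf hv0f))
        · rintro rfl; exact ⟨hv0e, hv0f⟩
      rw [hfil]
      simp [hadj, Matrix.one_apply_ne hef]
    · have hfil : (Finset.univ.filter fun v => v ∈ (e : Sym2 V) ∧ v ∈ (f : Sym2 V))
          = ∅ := by
        ext v
        simp only [Finset.mem_filter, Finset.mem_univ, true_and, Finset.notMem_empty,
          iff_false]
        rintro ⟨hve, hvf⟩
        exact hadj ⟨hef, v, hve, hvf⟩
      rw [hfil]
      simp [hadj, Matrix.one_apply_ne hef]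
end Inc

/-- For a connected unicyclic bipartite graph `G` on `n` vertices (so `G` has
exactly `n` edges and is 2-colorable), the characteristic polynomial of the
adjacency matrix of the line graph of `G` equals the characteristic polynomial
of the Laplacian `L(G)` composed with `X + 2`; equivalently, the Laplacian
eigenvalues of `G` are exactly the adjacency eigenvalues of the line graph
shifted by `2`. -/
theorem lineGraph_adjMatrix_charpoly_of_unicyclic_bipartite
    {V : Type*} [Fintype V] [DecidableEq V] (G : SimpleGraph V)
    (hconn : G.Connected) (huni : G.edgeFinset.card = Fintype.card V)
    (hbip : G.Colorable 2) :
    (G.lineGraph.adjMatrix ℝ).charpoly = (G.lapMatrix ℝ).charpoly.comp (X + 2) := by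
  obtain ⟨c⟩ := hbip
  have hcard : Fintype.card V = Fintype.card G.edgeSet := by
    rw [← huni, SimpleGraph.edgeFinset, Set.toFinset_card]
  have h1 : (G.lapMatrix ℝ).charpoly
      = (G.lineGraph.adjMatrix ℝ + (2:ℝ) • (1 : Matrix G.edgeSet G.edgeSet ℝ)).charpoly := by
    rw [← sIncMatrix_mul_transpose G c, ← sIncMatrix_transpose_mul G c]
    exact charpoly_mul_comm_of_card_eq hcard (sIncMatrix G c) (sIncMatrix G c)ᵀ
  have h2 := charpoly_add_smul_one_comp (G.lineGraph.adjMatrix ℝ) 2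
  have hC : C (2:ℝ) = (2:ℝ[X]) := by
    rw [show (2:ℝ) = ((2:ℕ):ℝ) by norm_num, map_natCast]
    norm_num
  rw [h1, ← h2, hC]
end

section
/- Let G be a simple graph on a finite vertex type with n vertices, m edges, degree sequence (dᵥ)ᵥ, and t triangles, and let Q(G) be its signless Laplacian matrix. Then trace(Q(G)) = 2m, trace(Q(G)²) = 2m + Σᵥ dᵥ², and trace(Q(G)³) = 6t + 3·Σᵥ dᵥ² + Σᵥ dᵥ³. -/
open SimpleGraph Matrix Polynomial
open scoped Classical

section Aux

variable {V : Type*} [Fintype V] [DecidableEq V]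

private lemma trace_diag_mul (d : V → ℝ) (M : Matrix V V ℝ) :
    (Matrix.diagonal d * M).trace = ∑ v, d v * M v v := by
  simp [Matrix.trace, Matrix.diag, Matrix.diagonal_mul]

private lemma trace_adj_cube (G : SimpleGraph V) :
    (G.adjMatrix ℝ * (G.adjMatrix ℝ * G.adjMatrix ℝ)).trace
      = 6 * ((G.cliqueFinset 3).card : ℝ) := by
  classical
  set T : Finset (V × V × V) :=
    Finset.univ.filter
      (fun p => G.Adj p.1 p.2.1 ∧ G.Adj p.2.1 p.2.2 ∧ G.Adj p.2.2 p.1) with hT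
  have h1 : (G.adjMatrix ℝ * (G.adjMatrix ℝ * G.adjMatrix ℝ)).trace = (T.card : ℝ) := by
    have hmid : (G.adjMatrix ℝ * (G.adjMatrix ℝ * G.adjMatrix ℝ)).trace =
        ∑ u : V, ∑ v : V, ∑ w : V,
          if G.Adj u v ∧ G.Adj v w ∧ G.Adj w u then (1 : ℝ) else 0 := by
      simp only [Matrix.trace, Matrix.diag, Matrix.mul_apply, adjMatrix_apply,
        Finset.mul_sum]
      refine Finset.sum_congr rfl fun u _ => Finset.sum_congr rfl fun v _ =>
        Finset.sum_congr rfl fun w _ => ?_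
      by_cases h1 : G.Adj u v <;> by_cases h2 : G.Adj v w <;> by_cases h3 : G.Adj w u <;>
        simp [h1, h2, h3]
    rw [hmid, hT, Finset.card_filter]
    push_cast
    simp only [Fintype.sum_prod_type]
  have h2 : T.card = 6 * (G.cliqueFinset 3).card := by
    rw [Finset.card_eq_sum_card_fiberwise
      (f := fun p : V × V × V => ({p.1, p.2.1, p.2.2} : Finset V)) (t := G.cliqueFinset 3)
      (by
        rintro ⟨u, v, w⟩ hp
        rw [hT, Finset.mem_coe, Finset.mem_filter] at hp
        obtain ⟨-, h1, h2, h3⟩ := hp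
        rw [Finset.mem_coe, mem_cliqueFinset_iff]
        exact is3Clique_triple_iff.2 ⟨h1, h3.symm, h2⟩)]
    rw [Finset.sum_congr rfl (g := fun _ => 6) ?_, Finset.sum_const, smul_eq_mul, mul_comm]
    intro s hs
    rw [mem_cliqueFinset_iff, is3Clique_iff] at hs
    obtain ⟨a, b, c, hab, hac, hbc, rfl⟩ := hs
    have hne1 : a ≠ b := hab.ne
    have hne2 : a ≠ c := hac.ne
    have hne3 : b ≠ c := hbc.ne
    have : T.filter (fun p : V × V × V => ({p.1, p.2.1, p.2.2} : Finset V) = {a, b, c}) =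
        {(a, b, c), (a, c, b), (b, a, c), (b, c, a), (c, a, b), (c, b, a)} := by
      ext ⟨u, v, w⟩
      simp only [hT, Finset.mem_filter, Finset.mem_univ, true_and, Finset.mem_insert,
        Finset.mem_singleton, Prod.mk.injEq]
      constructor
      · rintro ⟨⟨h1, h2, h3⟩, hset⟩
        have hu : u ∈ ({a, b, c} : Finset V) := by
          rw [← hset]; simp
        have hv : v ∈ ({a, b, c} : Finset V) := by
          rw [← hset]; simp
        have hw : w ∈ ({a, b, c} : Finset V) := by
          rw [← hset]; simp
        have huv := h1.ne
        have hvw := h2.ne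
        have hwu := h3.ne
        simp only [Finset.mem_insert, Finset.mem_singleton] at hu hv hw
        rcases hu with rfl | rfl | rfl <;> rcases hv with rfl | rfl | rfl <;>
          rcases hw with rfl | rfl | rfl <;> simp_all
      · rintro (⟨rfl, rfl, rfl⟩ | ⟨rfl, rfl, rfl⟩ | ⟨rfl, rfl, rfl⟩ | ⟨rfl, rfl, rfl⟩ |
          ⟨rfl, rfl, rfl⟩ | ⟨rfl, rfl, rfl⟩) <;>
        · refine ⟨⟨?_, ?_, ?_⟩, ?_⟩ <;>
            first
            | exact hab | exact hab.symm | exact hac | exact hac.symm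
            | exact hbc | exact hbc.symm | rfl
            | (ext x; simp only [Finset.mem_insert, Finset.mem_singleton]; tauto)
    rw [this]
    rw [Finset.card_insert_of_notMem, Finset.card_insert_of_notMem,
      Finset.card_insert_of_notMem, Finset.card_insert_of_notMem,
      Finset.card_insert_of_notMem, Finset.card_singleton] <;>
      simp [Prod.ext_iff, hne1, hne2, hne3, hne1.symm, hne2.symm, hne3.symm]
  rw [h1, h2]
  push_cast
  ring

end Aux

/-- **Spectral moments of the signless Laplacian.**  For a graph `G` with `m`
edges, degrees `dᵥ` and `t` triangles: `tr Q = 2m`, `tr Q² = 2m + Σ dᵥ²`, and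
`tr Q³ = 6t + 3Σ dᵥ² + Σ dᵥ³`. -/
theorem signlessLap_trace_pow
    {V : Type*} [Fintype V] [DecidableEq V] (G : SimpleGraph V) :
    (signlessLap G).trace = 2 * (G.edgeFinset.card : ℝ) ∧
      ((signlessLap G) ^ 2).trace =
        2 * (G.edgeFinset.card : ℝ) + (∑ v : V, (G.degree v : ℝ) ^ 2) ∧
      ((signlessLap G) ^ 3).trace =
        6 * ((G.cliqueFinset 3).card : ℝ) + 3 * (∑ v : V, (G.degree v : ℝ) ^ 2) +
          (∑ v : V, (G.degree v : ℝ) ^ 3) := by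
  classical
  set A := G.adjMatrix ℝ with hA
  set D := G.degMatrix ℝ with hD
  have hsum : (∑ v : V, (G.degree v : ℝ)) = 2 * (G.edgeFinset.card : ℝ) := by
    exact_mod_cast G.sum_degrees_eq_twice_card_edges
  have htrD : D.trace = 2 * (G.edgeFinset.card : ℝ) := by
    rw [hD, degMatrix, Matrix.trace_diagonal, hsum]
  have htrA : A.trace = 0 := G.trace_adjMatrix ℝ
  have hAdiag : ∀ v, A v v = 0 := fun v => by simp [hA]
  have hA2diag : ∀ v, (A * A) v v = (G.degree v : ℝ) := fun v => by
    simpa [hA] using G.adjMatrix_mul_self_apply_self (α := ℝ) v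
  have htrDM : ∀ M : Matrix V V ℝ, (D * M).trace = ∑ v, (G.degree v : ℝ) * M v v := by
    intro M; rw [hD, degMatrix]; exact trace_diag_mul _ M
  have htrA3 : (A * (A * A)).trace = 6 * ((G.cliqueFinset 3).card : ℝ) := trace_adj_cube G
  refine ⟨?_, ?_, ?_⟩
  · simp only [signlessLap, ← hA, ← hD, Matrix.trace_add, htrD, htrA, add_zero]
  · have : (signlessLap G) ^ 2 = D * D + D * A + A * D + A * A := by
      rw [show (signlessLap G) ^ 2 = signlessLap G * signlessLap G from sq _]
      simp only [signlessLap, ← hA, ← hD]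
      noncomm_ring
    rw [this, Matrix.trace_add, Matrix.trace_add, Matrix.trace_add]
    have h1 : (D * D).trace = ∑ v, (G.degree v : ℝ) ^ 2 := by
      rw [htrDM]
      refine Finset.sum_congr rfl fun v _ => ?_
      rw [hD, degMatrix, Matrix.diagonal_apply_eq, sq]
    have h2 : (D * A).trace = 0 := by
      rw [htrDM]; simp [hAdiag]
    have h3 : (A * D).trace = 0 := by rw [Matrix.trace_mul_comm]; exact h2
    have h4 : (A * A).trace = 2 * (G.edgeFinset.card : ℝ) := by
      rw [Matrix.trace]
      simp only [Matrix.diag]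
      rw [Finset.sum_congr rfl fun v _ => hA2diag v, hsum]
    rw [h1, h2, h3, h4]; ring
  · have hexp : (signlessLap G) ^ 3 =
        D * (D * D) + D * (D * A) + D * (A * D) + D * (A * A) +
        A * (D * D) + A * (D * A) + A * (A * D) + A * (A * A) := by
      rw [pow_succ, sq]
      simp only [signlessLap, ← hA, ← hD]
      noncomm_ring
    rw [hexp]
    simp only [Matrix.trace_add]
    have hDDd : ∀ v, (D * D) v v = (G.degree v : ℝ) ^ 2 := fun v => by
      rw [hD, degMatrix]
      simp [Matrix.mul_apply, Matrix.diagonal_apply, sq]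
    have e1 : (D * (D * D)).trace = ∑ v, (G.degree v : ℝ) ^ 3 := by
      rw [htrDM]
      refine Finset.sum_congr rfl fun v _ => ?_
      rw [hDDd]; ring
    have hDAd : ∀ v, (D * A) v v = 0 := fun v => by
      rw [hD, degMatrix]
      simp [Matrix.diagonal_mul, hAdiag]
    have hADd : ∀ v, (A * D) v v = 0 := fun v => by
      rw [hD, degMatrix]
      simp [Matrix.mul_diagonal, hAdiag]
    have e2 : (D * (D * A)).trace = 0 := by rw [htrDM]; simp [hDAd]
    have e3 : (D * (A * D)).trace = 0 := by rw [htrDM]; simp [hADd]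
    have e4 : (D * (A * A)).trace = ∑ v, (G.degree v : ℝ) ^ 2 := by
      rw [htrDM]
      refine Finset.sum_congr rfl fun v _ => ?_
      rw [hA2diag]; ring
    have e5 : (A * (D * D)).trace = 0 := by
      rw [Matrix.trace_mul_comm, Matrix.mul_assoc]
      exact e2
    have e6 : (A * (D * A)).trace = ∑ v, (G.degree v : ℝ) ^ 2 := by
      rw [Matrix.trace_mul_comm, Matrix.mul_assoc]
      exact e4
    have e7 : (A * (A * D)).trace = ∑ v, (G.degree v : ℝ) ^ 2 := by
      rw [← Matrix.mul_assoc, Matrix.trace_mul_comm]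
      exact e4
    rw [e1, e2, e3, e4, e5, e6, e7, htrA3]
    ring
end

section
/- Let G be a simple graph on a finite vertex type and let Q(G) be its signless Laplacian matrix over ℝ. Then the dimension of the kernel of the linear map x ↦ Q(G).mulVec x (equivalently, the multiplicity of the eigenvalue 0 of Q(G)) equals the number of connected components of G that are bipartite, i.e. the cardinality of the set of connected components c of G such that the subgraph induced by the vertex set of c is 2-colorable. -/
open SimpleGraph Matrix Polynomial
open scoped Classical

section Aux

set_option linter.unusedSectionVars false

variable {V : Type*} [Fintype V] [DecidableEq V]

/-- The space of "edge-sign" vectors: `x u = -x v` across every edge. -/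
def signK (G : SimpleGraph V) : Submodule ℝ (V → ℝ) where
  carrier := {x | ∀ u v, G.Adj u v → x u = - x v}
  add_mem' := by
    intro a b ha hb u v h
    simp only [Pi.add_apply, ha u v h, hb u v h]; ring
  zero_mem' := by intro u v h; simp
  smul_mem' := by
    intro c a ha u v h
    simp only [Pi.smul_apply, smul_eq_mul, ha u v h]; ring

lemma signlessLap_mulVec_apply (G : SimpleGraph V) (x : V → ℝ) (u : V) :
    (signlessLap G *ᵥ x) u = G.degree u * x u + ∑ v ∈ G.neighborFinset u, x v := by
  simp [signlessLap, add_mulVec, degMatrix_mulVec_apply, adjMatrix_mulVec_apply]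

lemma quad_form_eq (G : SimpleGraph V) (x : V → ℝ) :
    ∑ u, x u * ((signlessLap G *ᵥ x) u)
      = ∑ u, ∑ v, (if G.Adj u v then x u * (x u + x v) else 0) := by
  refine Finset.sum_congr rfl fun u _ => ?_
  rw [signlessLap_mulVec_apply]
  have h1 : ∑ v, (if G.Adj u v then x u * (x u + x v) else 0)
      = ∑ v ∈ G.neighborFinset u, (x u * x u + x u * x v) := by
    rw [neighborFinset_eq_filter, Finset.sum_filter]
    exact Finset.sum_congr rfl fun v _ => by split <;> ring
  rw [h1, Finset.sum_add_distrib, Finset.sum_const, ← G.card_neighborFinset_eq_degree,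
    nsmul_eq_mul, ← Finset.mul_sum]
  ring

lemma ker_signlessLap_eq (G : SimpleGraph V) :
    LinearMap.ker (signlessLap G).mulVecLin = signK G := by
  ext x
  simp only [LinearMap.mem_ker, mulVecLin_apply]
  constructor
  · intro hx u₀ v₀ huv
    have hS : ∑ u, ∑ v, (if G.Adj u v then x u * (x u + x v) else 0) = 0 := by
      rw [← quad_form_eq, hx]; simp
    have hswap : ∑ u, ∑ v, (if G.Adj u v then x u * (x u + x v) else 0)
        = ∑ u, ∑ v, (if G.Adj u v then x v * (x v + x u) else 0) := by
      rw [Finset.sum_comm]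
      refine Finset.sum_congr rfl fun a _ => Finset.sum_congr rfl fun b _ => ?_
      rw [G.adj_comm]
    have hsq : ∑ u, ∑ v, (if G.Adj u v then (x u + x v) ^ 2 else 0) = 0 := by
      have : ∑ u, ∑ v, (if G.Adj u v then (x u + x v) ^ 2 else 0)
          = (∑ u, ∑ v, (if G.Adj u v then x u * (x u + x v) else 0))
            + ∑ u, ∑ v, (if G.Adj u v then x v * (x v + x u) else 0) := by
        rw [← Finset.sum_add_distrib]
        refine Finset.sum_congr rfl fun a _ => ?_
        rw [← Finset.sum_add_distrib]
        refine Finset.sum_congr rfl fun b _ => ?_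
        split <;> ring
      rw [this, ← hswap, hS]; ring
    have hnn : ∀ u ∈ Finset.univ (α := V),
        (0:ℝ) ≤ ∑ v, (if G.Adj u v then (x u + x v) ^ 2 else 0) := by
      intro u _
      refine Finset.sum_nonneg fun v _ => ?_
      split
      · positivity
      · exact le_rfl
    have h0 : ∑ v, (if G.Adj u₀ v then (x u₀ + x v) ^ 2 else 0) = 0 :=
      (Finset.sum_eq_zero_iff_of_nonneg hnn).mp hsq u₀ (Finset.mem_univ _)
    have h00 : (if G.Adj u₀ v₀ then (x u₀ + x v₀) ^ 2 else 0) = 0 :=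
      (Finset.sum_eq_zero_iff_of_nonneg (fun v _ => by split <;> positivity)).mp h0 v₀
        (Finset.mem_univ _)
    rw [if_pos huv] at h00
    have := pow_eq_zero_iff (n := 2) (by norm_num) |>.mp h00
    linarith
  · intro hx
    funext u
    rw [signlessLap_mulVec_apply]
    have hdeg : (G.degree u : ℝ) * x u = ∑ v ∈ G.neighborFinset u, x u := by
      rw [Finset.sum_const, ← G.card_neighborFinset_eq_degree u]
      simp [mul_comm]
    rw [hdeg, ← Finset.sum_add_distrib]
    have : ∀ v ∈ G.neighborFinset u, x u + x v = 0 := by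
      intro v hv
      rw [mem_neighborFinset] at hv
      rw [hx u v hv]; ring
    simp [Finset.sum_congr rfl this]

lemma signK_walk {G : SimpleGraph V} {x : V → ℝ} (hx : x ∈ signK G) {u v : V}
    (p : G.Walk u v) : x v = (-1) ^ p.length * x u := by
  induction p with
  | nil => simp
  | @cons a b c h p ih =>
    have hw : x b = - x a := by have := hx a b h; linarith
    rw [Walk.length_cons, ih, hw, pow_succ]
    ring

lemma signK_eq_zero_of_not_colorable {G : SimpleGraph V} {x : V → ℝ} (hx : x ∈ signK G)
    (u : V) (h : ¬ (G.induce (G.connectedComponentMk u).supp).Colorable 2) : x u = 0 := by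
  by_contra hu
  apply h
  refine ⟨SimpleGraph.Coloring.mk (fun v => if 0 < x v.1 then 0 else 1) ?_⟩
  rintro ⟨a, ha⟩ ⟨b, hb⟩ hab
  simp only [comap_adj, Function.Embedding.coe_subtype] at hab
  rw [ConnectedComponent.mem_supp_iff] at ha hb
  have hra : G.Reachable u a := (ConnectedComponent.exact ha).symm
  obtain ⟨p⟩ := hra
  have hxa : x a = (-1) ^ p.length * x u := signK_walk hx p
  have ha0 : x a ≠ 0 := by
    rw [hxa]
    exact mul_ne_zero (pow_ne_zero _ (by norm_num)) hu
  have hab' : x a = - x b := hx a b hab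
  have hb0 : x b ≠ 0 := by intro hc; rw [hc, neg_zero] at hab'; exact ha0 hab'
  by_cases hpos : 0 < x a
  · have hbneg : ¬ 0 < x b := by push_neg; nlinarith
    simp [hpos, hbneg]
  · have hneg : x a < 0 := lt_of_le_of_ne (not_lt.mp hpos) ha0
    have hbpos : 0 < x b := by nlinarith
    simp [hpos, hbpos]

/-- The sign given by a chosen 2-coloring of a component. -/
noncomputable def csgn (G : SimpleGraph V) (c : G.ConnectedComponent)
    (h : (G.induce c.supp).Colorable 2) (u : V) (hu : u ∈ c.supp) : ℝ :=
  if h.some ⟨u, hu⟩ = 0 then 1 else -1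

lemma csgn_ne_zero (G : SimpleGraph V) (c : G.ConnectedComponent)
    (h : (G.induce c.supp).Colorable 2) (u : V) (hu : u ∈ c.supp) :
    csgn G c h u hu ≠ 0 := by
  unfold csgn; split <;> norm_num

lemma csgn_adj (G : SimpleGraph V) (c : G.ConnectedComponent)
    (h : (G.induce c.supp).Colorable 2) {u v : V} (hu : u ∈ c.supp) (hv : v ∈ c.supp)
    (hadj : G.Adj u v) : csgn G c h u hu = - csgn G c h v hv := by
  have hne : h.some ⟨u, hu⟩ ≠ h.some ⟨v, hv⟩ := h.some.valid (by simpa using hadj)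
  unfold csgn
  by_cases h1 : h.some ⟨u, hu⟩ = 0 <;> by_cases h2 : h.some ⟨v, hv⟩ = 0 <;>
    simp [h1, h2] at hne ⊢
  · exact absurd ((Fin.eq_one_of_ne_zero _ h1).trans (Fin.eq_one_of_ne_zero _ h2).symm) hne

/-- The global sign function. -/
noncomputable def bsgn (G : SimpleGraph V) (u : V) : ℝ :=
  if h : (G.induce (G.connectedComponentMk u).supp).Colorable 2 then
    csgn G _ h u ((ConnectedComponent.mem_supp_iff _ _).mpr rfl) else 0

lemma bsgn_eq (G : SimpleGraph V) {c : G.ConnectedComponent}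
    (h : (G.induce c.supp).Colorable 2) {u : V} (hu : G.connectedComponentMk u = c) :
    bsgn G u = csgn G c h u ((ConnectedComponent.mem_supp_iff _ _).mpr hu) := by
  subst hu
  unfold bsgn
  rw [dif_pos h]

lemma bsgn_eq_zero (G : SimpleGraph V) {c : G.ConnectedComponent}
    (h : ¬ (G.induce c.supp).Colorable 2) {u : V} (hu : G.connectedComponentMk u = c) :
    bsgn G u = 0 := by
  subst hu
  unfold bsgn
  rw [dif_neg h]

lemma bsgn_adj (G : SimpleGraph V) {u v : V} (hadj : G.Adj u v) :
    bsgn G u = - bsgn G v := by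
  have hc : G.connectedComponentMk u = G.connectedComponentMk v :=
    ConnectedComponent.sound hadj.reachable
  by_cases h : (G.induce (G.connectedComponentMk u).supp).Colorable 2
  · rw [bsgn_eq G h rfl, bsgn_eq G h hc.symm]
    exact csgn_adj G _ h _ _ hadj
  · rw [bsgn_eq_zero G h rfl, bsgn_eq_zero G h hc.symm]
    simp

/-- A representative of a connected component. -/
noncomputable def crep {G : SimpleGraph V} (c : G.ConnectedComponent) : V :=
  c.exists_rep.choose

lemma crep_spec {G : SimpleGraph V} (c : G.ConnectedComponent) :
    G.connectedComponentMk (crep c) = c := c.exists_rep.choose_spec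

/-- The linear map building a kernel vector from a value on each bipartite component. -/
noncomputable def buildVec (G : SimpleGraph V)
    (f : {c : G.ConnectedComponent // (G.induce c.supp).Colorable 2} → ℝ) : V → ℝ :=
  fun u => (if h : (G.induce (G.connectedComponentMk u).supp).Colorable 2 then
    f ⟨_, h⟩ else 0) * bsgn G u

lemma buildVec_mem (G : SimpleGraph V)
    (f : {c : G.ConnectedComponent // (G.induce c.supp).Colorable 2} → ℝ) :
    buildVec G f ∈ signK G := by
  intro u v hadj
  have hc : G.connectedComponentMk u = G.connectedComponentMk v :=
    ConnectedComponent.sound hadj.reachable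
  unfold buildVec
  rw [bsgn_adj G hadj]
  by_cases h : (G.induce (G.connectedComponentMk u).supp).Colorable 2
  · have hv : (G.induce (G.connectedComponentMk v).supp).Colorable 2 := hc ▸ h
    rw [dif_pos h, dif_pos hv]
    have : f ⟨_, h⟩ = f ⟨_, hv⟩ := congrArg f (Subtype.ext hc)
    rw [this]; ring
  · have hv : ¬ (G.induce (G.connectedComponentMk v).supp).Colorable 2 := hc ▸ h
    rw [dif_neg h, dif_neg hv]; ring


end Aux

/-- **The multiplicity of the eigenvalue `0` of the signless Laplacian equals the
number of bipartite connected components.**  The dimension of the kernel of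
`x ↦ Q(G) *ᵥ x` equals the number of connected components `c` of `G` whose
induced subgraph is 2-colorable. -/
theorem finrank_ker_signlessLap_eq_card_bipartite_components
    {V : Type*} [Fintype V] [DecidableEq V] (G : SimpleGraph V) :
    Module.finrank ℝ (LinearMap.ker (signlessLap G).mulVecLin) =
      Nat.card {c : G.ConnectedComponent // (G.induce c.supp).Colorable 2} := by
  classical
  set B := {c : G.ConnectedComponent // (G.induce c.supp).Colorable 2} with hB
  haveI : Finite G.ConnectedComponent := Quot.finite _
  haveI : Fintype B := Fintype.ofFinite _
  rw [ker_signlessLap_eq, Nat.card_eq_fintype_card]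
  -- the evaluation map
  let Ψ : signK G →ₗ[ℝ] (B → ℝ) :=
    { toFun := fun x c => x.1 (crep c.1)
      map_add' := fun _ _ => rfl
      map_smul' := fun _ _ => rfl }
  have hΨ : Function.Injective Ψ := by
    rw [injective_iff_map_eq_zero]
    rintro ⟨x, hx⟩ h0
    have h0' : ∀ c : B, x (crep c.1) = 0 := fun c => congrFun h0 c
    ext u
    show x u = 0
    by_cases h : (G.induce (G.connectedComponentMk u).supp).Colorable 2
    · have hrep : G.connectedComponentMk (crep (G.connectedComponentMk u))
          = G.connectedComponentMk u := crep_spec _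
      obtain ⟨p⟩ := ConnectedComponent.exact hrep
      have := signK_walk hx p
      rw [this, h0' ⟨_, h⟩, mul_zero]
    · exact signK_eq_zero_of_not_colorable hx u h
  -- the building map
  let Φ : (B → ℝ) →ₗ[ℝ] signK G :=
    LinearMap.codRestrict (signK G)
      { toFun := buildVec G
        map_add' := by
          intro f g; funext u; unfold buildVec
          by_cases h : (G.induce (G.connectedComponentMk u).supp).Colorable 2 <;>
            simp [h] <;> ring
        map_smul' := by
          intro a f; funext u; unfold buildVec
          by_cases h : (G.induce (G.connectedComponentMk u).supp).Colorable 2 <;>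
            simp [h] <;> ring }
      (fun f => buildVec_mem G f)
  have hΦ : Function.Injective Φ := by
    rw [injective_iff_map_eq_zero]
    intro f h0
    funext c
    rw [Pi.zero_apply]
    have h0' : buildVec G f (crep c.1) = 0 := by
      have := congrArg Subtype.val h0
      exact congrFun this (crep c.1)
    have hrep := crep_spec (G := G) c.1
    have hcol : (G.induce (G.connectedComponentMk (crep c.1)).supp).Colorable 2 := by
      rw [hrep]; exact c.2
    unfold buildVec at h0'
    rw [dif_pos hcol] at h0'
    have hb : bsgn G (crep c.1) ≠ 0 := by
      rw [bsgn_eq G c.2 hrep]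
      exact csgn_ne_zero G _ _ _ _
    have hf : f ⟨_, hcol⟩ = 0 := by
      rcases mul_eq_zero.mp h0' with h' | h'
      · exact h'
      · exact absurd h' hb
    have hc : (⟨_, hcol⟩ : B) = c := Subtype.ext hrep
    exact (congrArg f hc).symm.trans hf
  have h1 : Module.finrank ℝ (signK G) ≤ Fintype.card B := by
    have := LinearMap.finrank_le_finrank_of_injective hΨ
    simpa [Module.finrank_pi] using this
  have h2 : Fintype.card B ≤ Module.finrank ℝ (signK G) := by
    have := LinearMap.finrank_le_finrank_of_injective hΦ
    simpa [Module.finrank_pi] using this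
  omega
end

section
/- Let G be a simple graph on a finite vertex type and let u and v be distinct non-adjacent vertices of G with the same neighborhoods (G.neighborSet u = G.neighborSet v) and common degree r = G.degree u. Then r is an eigenvalue of the signless Laplacian matrix Q(G); that is, there exists a nonzero real vector x with Q(G).mulVec x = (r : ℝ) • x. -/
open SimpleGraph Matrix Polynomial
open scoped Classical

/-- If `u ≠ v` are non-adjacent vertices with the same neighbourhoods (hence the
same degree `r`), then `r` is an eigenvalue of the signless Laplacian `Q(G)`. -/
theorem degree_is_signlessLap_eigenvalue_of_duplicate_vertices
    {V : Type*} [Fintype V] [DecidableEq V] (G : SimpleGraph V) (u v : V)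
    (huv : u ≠ v) (hadj : ¬ G.Adj u v) (hnbr : G.neighborSet u = G.neighborSet v) :
    ∃ x : V → ℝ, x ≠ 0 ∧ (signlessLap G).mulVec x = (G.degree u : ℝ) • x := by
  have hAdj : ∀ x : V, G.Adj x u ↔ G.Adj x v := by
    intro x
    constructor <;> intro h
    · have : x ∈ G.neighborSet u := (G.adj_symm h)
      rw [hnbr] at this
      exact (G.adj_symm this)
    · have : x ∈ G.neighborSet v := (G.adj_symm h)
      rw [← hnbr] at this
      exact (G.adj_symm this)
  have hnf : G.neighborFinset u = G.neighborFinset v := by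
    ext x
    simp only [mem_neighborFinset]
    exact ⟨fun h => (hAdj x).mp (G.adj_symm h) |>.symm, fun h => (hAdj x).mpr (G.adj_symm h) |>.symm⟩
  have hdeg : G.degree u = G.degree v := by
    unfold SimpleGraph.degree
    rw [hnf]
  refine ⟨fun w => if w = u then 1 else if w = v then -1 else 0, ?_, ?_⟩
  · intro h
    have := congrFun h u
    simp at this
  · have hsum : ∀ w : V, (G.adjMatrix ℝ).mulVec
        (fun w => if w = u then 1 else if w = v then -1 else 0) w
        = (if G.Adj w u then (1:ℝ) else 0) + (if G.Adj w v then (-1:ℝ) else 0) := by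
      intro w
      rw [adjMatrix_mulVec_apply]
      have hfun : ∀ x : V, (if x = u then (1:ℝ) else if x = v then -1 else 0)
          = (if x = u then (1:ℝ) else 0) + (if x = v then (-1:ℝ) else 0) := by
        intro x
        by_cases hx : x = u <;> by_cases hy : x = v <;> simp_all
      simp_rw [hfun]
      rw [Finset.sum_add_distrib, Finset.sum_ite_eq', Finset.sum_ite_eq']
      simp [mem_neighborFinset]
    funext w
    simp only [signlessLap, add_mulVec, Pi.add_apply, degMatrix_mulVec_apply, hsum,
      Pi.smul_apply, smul_eq_mul]
    by_cases hw : w = u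
    · subst hw
      simp [hadj, G.loopless]
    · by_cases hw' : w = v
      · subst hw'
        have : ¬ G.Adj w u := fun h => hadj (G.adj_symm h)
        simp [this, G.loopless, hw, hdeg]
      · have : G.Adj w u ↔ G.Adj w v := hAdj w
        by_cases h1 : G.Adj w u <;> simp_all
end

section
/- Let G be a connected simple graph on a finite vertex type with at least two vertices, and let H be a proper spanning subgraph of G (a simple graph on the same vertex type with H ≤ G and H ≠ G). Then the largest eigenvalue of the signless Laplacian Q(G) is strictly greater than the largest eigenvalue of Q(H): q₁(G) > q₁(H). -/
open SimpleGraph Matrix Polynomial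
open scoped Classical

set_option linter.unusedSectionVars false
set_option maxHeartbeats 1000000

lemma signlessLap_isHermitian {V : Type*} [Fintype V] [DecidableEq V]
    (G : SimpleGraph V) : (signlessLap G).IsHermitian := by
  have h2 : (G.adjMatrix ℝ).IsHermitian := by
    rw [Matrix.IsHermitian, Matrix.conjTranspose_eq_transpose_of_trivial]
    exact G.isSymm_adjMatrix
  exact (Matrix.isHermitian_diagonal _).add h2

section Aux
variable {V : Type*} [Fintype V] [DecidableEq V] [Nonempty V]

section Rayleigh
variable {A : Matrix V V ℝ} (hA : A.IsHermitian)

noncomputable def evec (hA : A.IsHermitian) (i : V) : V → ℝ := ⇑(hA.eigenvectorBasis i)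

lemma evec_dot (i j : V) : evec hA i ⬝ᵥ evec hA j = if i = j then 1 else 0 := by
  have h := hA.eigenvectorBasis.orthonormal
  rw [orthonormal_iff_ite] at h
  have := h i j
  rw [PiLp.inner_apply] at this
  simpa [dotProduct, mul_comm, evec] using this

lemma evec_dot' (i j : V) :
    (∑ k, evec hA i k * evec hA j k) = if i = j then 1 else 0 := evec_dot hA i j

lemma x_eq_sum (x : V → ℝ) : x = fun j => ∑ i, (evec hA i ⬝ᵥ x) * evec hA i j := by
  have h := hA.eigenvectorBasis.sum_repr' (WithLp.toLp 2 x)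
  funext j
  have h2 : (∑ i, (inner ℝ (hA.eigenvectorBasis i) (WithLp.toLp 2 x) : ℝ) • hA.eigenvectorBasis i) j = x j := by
    rw [h]
  rw [← h2]
  rw [show ((∑ i, (inner ℝ (hA.eigenvectorBasis i) (WithLp.toLp 2 x) : ℝ) • hA.eigenvectorBasis i) j)
      = ∑ i, ((inner ℝ (hA.eigenvectorBasis i) (WithLp.toLp 2 x) : ℝ) • hA.eigenvectorBasis i) j from
    by simp]
  simp [PiLp.inner_apply, dotProduct, mul_comm, evec]

lemma dot_expand (a b : V → ℝ) :
    (fun j => ∑ i, a i * evec hA i j) ⬝ᵥ (fun j => ∑ i, b i * evec hA i j) = ∑ i, a i * b i := by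
  simp only [dotProduct]
  calc ∑ j, (∑ i, a i * evec hA i j) * (∑ k, b k * evec hA k j)
      = ∑ i, ∑ k, (a i * b k) * ∑ j, evec hA i j * evec hA k j := by
        simp_rw [Finset.sum_mul_sum, Finset.mul_sum]
        rw [Finset.sum_comm]
        refine Finset.sum_congr rfl fun i _ => ?_
        rw [Finset.sum_comm]
        exact Finset.sum_congr rfl fun k _ => Finset.sum_congr rfl fun j _ => by ring
    _ = ∑ i, a i * b i := by
        simp only [evec_dot' hA, mul_ite, mul_one, mul_zero]
        simp

lemma mulVec_expand (x : V → ℝ) :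
    A *ᵥ x = fun j => ∑ i, (hA.eigenvalues i * (evec hA i ⬝ᵥ x)) * evec hA i j := by
  set c : V → ℝ := fun i => evec hA i ⬝ᵥ x with hc
  conv_lhs => rw [x_eq_sum hA x]
  funext k
  simp only [mulVec, dotProduct]
  calc ∑ j, A k j * ∑ i, c i * evec hA i j
      = ∑ i, c i * ∑ j, A k j * evec hA i j := by
        simp_rw [Finset.mul_sum]
        rw [Finset.sum_comm]
        exact Finset.sum_congr rfl fun i _ => Finset.sum_congr rfl fun j _ => by ring
    _ = ∑ i, (hA.eigenvalues i * c i) * evec hA i k := by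
        refine Finset.sum_congr rfl fun i _ => ?_
        have h := congrFun (hA.mulVec_eigenvectorBasis i) k
        simp only [mulVec, dotProduct, Pi.smul_apply, smul_eq_mul] at h
        rw [show (∑ j, A k j * evec hA i j) = hA.eigenvalues i * evec hA i k from h]
        ring

lemma quad_expand (x : V → ℝ) :
    x ⬝ᵥ (A *ᵥ x) = ∑ i, hA.eigenvalues i * (evec hA i ⬝ᵥ x) ^ 2 := by
  calc x ⬝ᵥ (A *ᵥ x)
      = (fun j => ∑ i, (evec hA i ⬝ᵥ x) * evec hA i j) ⬝ᵥ
        (fun j => ∑ i, (hA.eigenvalues i * (evec hA i ⬝ᵥ x)) * evec hA i j) := by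
        rw [← mulVec_expand hA x, ← x_eq_sum hA x]
    _ = ∑ i, (evec hA i ⬝ᵥ x) * (hA.eigenvalues i * (evec hA i ⬝ᵥ x)) := dot_expand hA _ _
    _ = ∑ i, hA.eigenvalues i * (evec hA i ⬝ᵥ x) ^ 2 :=
        Finset.sum_congr rfl fun i _ => by ring

lemma dot_self_expand (x : V → ℝ) : x ⬝ᵥ x = ∑ i, (evec hA i ⬝ᵥ x) ^ 2 := by
  calc x ⬝ᵥ x
      = (fun j => ∑ i, (evec hA i ⬝ᵥ x) * evec hA i j) ⬝ᵥ
        (fun j => ∑ i, (evec hA i ⬝ᵥ x) * evec hA i j) := by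
        rw [← x_eq_sum hA x]
    _ = ∑ i, (evec hA i ⬝ᵥ x) * (evec hA i ⬝ᵥ x) := dot_expand hA _ _
    _ = ∑ i, (evec hA i ⬝ᵥ x) ^ 2 := Finset.sum_congr rfl fun i _ => by ring

lemma eig_le_sup (i : V) : hA.eigenvalues i ≤ ⨆ j, hA.eigenvalues j :=
  le_ciSup (Set.Finite.bddAbove (Set.finite_range _)) i

lemma rayleigh_le (x : V → ℝ) :
    x ⬝ᵥ (A *ᵥ x) ≤ (⨆ j, hA.eigenvalues j) * (x ⬝ᵥ x) := by
  rw [quad_expand hA, dot_self_expand hA, Finset.mul_sum]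
  exact Finset.sum_le_sum fun i _ =>
    mul_le_mul_of_nonneg_right (eig_le_sup hA i) (sq_nonneg _)

lemma rayleigh_eq (x : V → ℝ)
    (h : x ⬝ᵥ (A *ᵥ x) = (⨆ j, hA.eigenvalues j) * (x ⬝ᵥ x)) :
    A *ᵥ x = (⨆ j, hA.eigenvalues j) • x := by
  set lam := ⨆ j, hA.eigenvalues j with hlam
  have h' : ∑ i, hA.eigenvalues i * (evec hA i ⬝ᵥ x) ^ 2
      = ∑ i, lam * (evec hA i ⬝ᵥ x) ^ 2 := by
    rw [← quad_expand hA x, ← Finset.mul_sum, ← dot_self_expand hA x]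
    exact h
  have hzero : ∑ i, (lam - hA.eigenvalues i) * (evec hA i ⬝ᵥ x) ^ 2 = 0 := by
    simp only [sub_mul]
    rw [Finset.sum_sub_distrib, h']
    exact sub_self _
  have heach := (Finset.sum_eq_zero_iff_of_nonneg (fun i _ =>
    mul_nonneg (sub_nonneg.2 (eig_le_sup hA i)) (sq_nonneg _))).1 hzero
  have hkey : ∀ i, hA.eigenvalues i * (evec hA i ⬝ᵥ x) = lam * (evec hA i ⬝ᵥ x) := by
    intro i
    rcases mul_eq_zero.1 (heach i (Finset.mem_univ i)) with h1 | h1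
    · rw [sub_eq_zero] at h1; rw [hlam, h1]
    · rw [sq_eq_zero_iff.1 h1, mul_zero, mul_zero]
  rw [mulVec_expand hA x]
  conv_rhs => rw [x_eq_sum hA x]
  funext k
  simp only [Pi.smul_apply, smul_eq_mul, Finset.mul_sum]
  exact Finset.sum_congr rfl fun i _ => by rw [hkey i]; ring

lemma exists_max_eigvec :
    ∃ x : V → ℝ, x ⬝ᵥ x = 1 ∧ A *ᵥ x = (⨆ j, hA.eigenvalues j) • x := by
  obtain ⟨i₀, hmax⟩ := Finite.exists_max hA.eigenvalues
  have hsup : (⨆ j, hA.eigenvalues j) = hA.eigenvalues i₀ :=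
    le_antisymm (ciSup_le hmax) (eig_le_sup hA i₀)
  refine ⟨evec hA i₀, by simpa using evec_dot hA i₀ i₀, ?_⟩
  rw [hsup]
  exact hA.mulVec_eigenvectorBasis i₀

end Rayleigh


lemma signlessLap_apply (G : SimpleGraph V) (i j : V) :
    signlessLap G i j
      = (if i = j then (G.degree i : ℝ) else 0) + (if G.Adj i j then 1 else 0) := by
  simp [signlessLap, Matrix.add_apply, SimpleGraph.degMatrix, Matrix.diagonal_apply]

lemma signlessLap_nonneg (G : SimpleGraph V) (i j : V) : 0 ≤ signlessLap G i j := by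
  rw [signlessLap_apply]
  positivity

lemma degree_mono {G H : SimpleGraph V} (hle : H ≤ G) (v : V) :
    H.degree v ≤ G.degree v := by
  apply Finset.card_le_card
  intro w hw
  rw [SimpleGraph.mem_neighborFinset] at *
  exact hle hw

lemma degree_strict {G H : SimpleGraph V} (hle : H ≤ G) {u v : V}
    (hadj : G.Adj u v) (hnadj : ¬ H.Adj u v) : H.degree u < G.degree u := by
  apply Finset.card_lt_card
  constructor
  · intro w hw
    rw [SimpleGraph.mem_neighborFinset] at *
    exact hle hw
  · intro hsub
    have := hsub ((G.mem_neighborFinset u v).2 hadj)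
    rw [SimpleGraph.mem_neighborFinset] at this
    exact hnadj this

lemma signlessLap_mono {G H : SimpleGraph V} (hle : H ≤ G) (i j : V) :
    signlessLap H i j ≤ signlessLap G i j := by
  rw [signlessLap_apply, signlessLap_apply]
  gcongr
  · split
    · exact_mod_cast degree_mono hle i
    · exact le_refl 0
  · by_cases h : H.Adj i j
    · simp [h, hle h]
    · simp only [h, if_false]
      split <;> norm_num


section Quad

lemma quad_double (M : Matrix V V ℝ) (x : V → ℝ) :
    x ⬝ᵥ (M *ᵥ x) = ∑ i, ∑ j, x i * (M i j * x j) := by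
  simp only [dotProduct, mulVec, Finset.mul_sum]

lemma quad_abs {M : Matrix V V ℝ} (hM : ∀ i j, 0 ≤ M i j) (x : V → ℝ) :
    x ⬝ᵥ (M *ᵥ x) ≤ (fun i => |x i|) ⬝ᵥ (M *ᵥ fun i => |x i|) := by
  rw [quad_double, quad_double]
  refine Finset.sum_le_sum fun i _ => Finset.sum_le_sum fun j _ => ?_
  calc x i * (M i j * x j) ≤ |x i * (M i j * x j)| := le_abs_self _
    _ = |x i| * (M i j * |x j|) := by
        rw [abs_mul, abs_mul, abs_of_nonneg (hM i j)]
    _ = _ := rfl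

lemma quad_mono {M N : Matrix V V ℝ} (hMN : ∀ i j, M i j ≤ N i j)
    {z : V → ℝ} (hz : ∀ i, 0 ≤ z i) :
    z ⬝ᵥ (M *ᵥ z) ≤ z ⬝ᵥ (N *ᵥ z) := by
  rw [quad_double, quad_double]
  refine Finset.sum_le_sum fun i _ => Finset.sum_le_sum fun j _ => ?_
  exact mul_le_mul_of_nonneg_left (mul_le_mul_of_nonneg_right (hMN i j) (hz j)) (hz i)

lemma quad_strict {M N : Matrix V V ℝ} (hMN : ∀ i j, M i j ≤ N i j)
    {z : V → ℝ} (hz : ∀ i, 0 ≤ z i) (u : V) (hd : M u u + 1 ≤ N u u) :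
    z ⬝ᵥ (M *ᵥ z) + z u ^ 2 ≤ z ⬝ᵥ (N *ᵥ z) := by
  rw [quad_double, quad_double]
  have hrow : ∀ i, (∑ j, z i * (M i j * z j)) + (if i = u then z u ^ 2 else 0)
      ≤ ∑ j, z i * (N i j * z j) := by
    intro i
    by_cases hiu : i = u
    · subst hiu
      simp only [eq_self_iff_true, if_true]
      have hsingle : z i * ((N i i - M i i) * z i)
          ≤ ∑ j, z i * ((N i j - M i j) * z j) :=
        Finset.single_le_sum (f := fun j => z i * ((N i j - M i j) * z j))
          (fun j _ => mul_nonneg (hz i)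
            (mul_nonneg (sub_nonneg.2 (hMN i j)) (hz j))) (Finset.mem_univ i)
      have h2 : z i ^ 2 ≤ z i * ((N i i - M i i) * z i) := by
        have h3 : (1 : ℝ) ≤ N i i - M i i := by linarith
        nlinarith [hz i]
      have h4 : ∑ j, z i * ((N i j - M i j) * z j)
          = (∑ j, z i * (N i j * z j)) - ∑ j, z i * (M i j * z j) := by
        rw [← Finset.sum_sub_distrib]
        exact Finset.sum_congr rfl fun j _ => by ring
      linarith
    · simp only [if_neg hiu, add_zero]
      exact Finset.sum_le_sum fun j _ =>
        mul_le_mul_of_nonneg_left (mul_le_mul_of_nonneg_right (hMN i j) (hz j)) (hz i)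
  calc (∑ i, ∑ j, z i * (M i j * z j)) + z u ^ 2
      = ∑ i, ((∑ j, z i * (M i j * z j)) + if i = u then z u ^ 2 else 0) := by
        rw [Finset.sum_add_distrib, Finset.sum_ite_eq' Finset.univ u fun _ => z u ^ 2,
          if_pos (Finset.mem_univ u)]
    _ ≤ ∑ i, ∑ j, z i * (N i j * z j) := Finset.sum_le_sum fun i _ => hrow i

end Quad

lemma walk_boundary {G : SimpleGraph V} {z : V → ℝ} (hz : ∀ i, 0 ≤ z i) :
    ∀ {u w : V}, G.Walk u w → z u = 0 → 0 < z w →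
      ∃ a b, G.Adj a b ∧ z a = 0 ∧ 0 < z b := by
  intro u w p
  induction p with
  | nil => intro hu hw; rw [hu] at hw; exact absurd hw (lt_irrefl 0)
  | @cons u b w h q ih =>
    intro hu hw
    by_cases hb : 0 < z b
    · exact ⟨u, b, h, hu, hb⟩
    · exact ih (le_antisymm (not_lt.1 hb) (hz b)) hw


end Aux

/-- **Strict monotonicity of the signless Laplacian spectral radius.**  If `G` is
connected with at least two vertices and `H` is a proper spanning subgraph of `G`
(`H ≤ G`, `H ≠ G`), then `q₁(G) > q₁(H)`. -/
theorem signlessLap_spectral_radius_lt_of_proper_subgraph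
    {V : Type*} [Fintype V] [DecidableEq V] (G H : SimpleGraph V)
    (hconn : G.Connected) (hcard : 2 ≤ Fintype.card V)
    (hle : H ≤ G) (hne : H ≠ G) :
    (⨆ i, (signlessLap_isHermitian H).eigenvalues i) <
      ⨆ i, (signlessLap_isHermitian G).eigenvalues i := by
  haveI : Nonempty V := Fintype.card_pos_iff.1 (by omega)
  have hQG := signlessLap_isHermitian G
  have hQH := signlessLap_isHermitian H
  set qG := ⨆ i, hQG.eigenvalues i with hqG
  set qH := ⨆ i, hQH.eigenvalues i with hqH
  by_contra hcon
  push_neg at hcon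
  -- extra edge
  have hlt : H < G := lt_of_le_of_ne hle hne
  have hedge : ∃ u v, G.Adj u v ∧ ¬ H.Adj u v := by
    by_contra hc
    push_neg at hc
    exact hlt.not_ge fun {a b} hab => hc a b hab
  obtain ⟨u, v, huv, hnuv⟩ := hedge
  -- eigenvector of Q(H)
  obtain ⟨y, hy1, hy2⟩ := exists_max_eigvec hQH
  set z : V → ℝ := fun i => |y i| with hzdef
  have hznn : ∀ i, 0 ≤ z i := fun i => abs_nonneg _
  have hz1 : z ⬝ᵥ z = 1 := by
    rw [← hy1]
    simp only [dotProduct, hzdef, abs_mul_abs_self]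
  have hyQ : y ⬝ᵥ (signlessLap H *ᵥ y) = qH := by
    rw [hy2, dotProduct_smul, smul_eq_mul, hy1, mul_one]
  have h1 : qH ≤ z ⬝ᵥ (signlessLap H *ᵥ z) := by
    rw [← hyQ]; exact quad_abs (signlessLap_nonneg H) y
  have h2 : z ⬝ᵥ (signlessLap H *ᵥ z) ≤ z ⬝ᵥ (signlessLap G *ᵥ z) :=
    quad_mono (signlessLap_mono hle) hznn
  have h3 : z ⬝ᵥ (signlessLap G *ᵥ z) ≤ qG := by
    have := rayleigh_le hQG z
    rwa [hz1, mul_one] at this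
  -- z u = 0
  have hzu : z u = 0 := by
    by_contra h0
    have hzu' : 0 < z u := lt_of_le_of_ne (hznn u) (Ne.symm h0)
    have hdeg : H.degree u < G.degree u := degree_strict hle huv hnuv
    have hdiag : signlessLap H u u + 1 ≤ signlessLap G u u := by
      rw [signlessLap_apply, signlessLap_apply]
      simp only [eq_self_iff_true, if_true, SimpleGraph.irrefl, if_false, add_zero]
      have : (H.degree u : ℝ) + 1 ≤ (G.degree u : ℝ) := by exact_mod_cast hdeg
      linarith
    have hstrict := quad_strict (signlessLap_mono hle) hznn u hdiag
    nlinarith [sq_nonneg (z u), hzu']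
  -- all the Rayleigh inequalities are equalities
  have hEq : z ⬝ᵥ (signlessLap G *ᵥ z) = qG * (z ⬝ᵥ z) := by
    rw [hz1, mul_one]; linarith
  have hvec := rayleigh_eq hQG z hEq
  -- find a positive coordinate
  have hex : ∃ w, 0 < z w := by
    by_contra hc
    push_neg at hc
    have : z ⬝ᵥ z = 0 := by
      simp only [dotProduct]
      refine Finset.sum_eq_zero fun i _ => ?_
      have : z i = 0 := le_antisymm (hc i) (hznn i)
      rw [this, mul_zero]
    rw [this] at hz1; norm_num at hz1
  obtain ⟨w, hw⟩ := hex
  obtain ⟨a, b, hab, hza, hzb⟩ :=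
    walk_boundary hznn (hconn.preconnected u w).some hzu hw
  -- contradiction at vertex a
  have hQab : signlessLap G a b = 1 := by
    rw [signlessLap_apply]
    simp [hab.ne, hab]
  have hlow : signlessLap G a b * z b ≤ (signlessLap G *ᵥ z) a :=
    Finset.single_le_sum (f := fun j => signlessLap G a j * z j)
      (fun j _ => mul_nonneg (signlessLap_nonneg G a j) (hznn j)) (Finset.mem_univ b)
  have hzero : (signlessLap G *ᵥ z) a = 0 := by
    rw [hvec]
    simp [hza]
  rw [hzero, hQab, one_mul] at hlow
  linarith
end
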